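/- arXiv:1911.02232 — 2 statements merged into one kernel-verified Lean document; each statement's English description precedes it below -/
import Mathlib

section
/- Let n ≥ 2 and let P be an irreducible column-stochastic n×n real matrix (all entries nonnegative and each column sums to 1). Let R = diag(r_1, …, r_n) be a diagonal matrix with r_i > 0 for all i, and suppose the r_i are not all equal. Then the function μ ↦ r(((1−μ)I + μP)R) is strictly decreasing on the interval (0, 1). -/
open Matrix Filter

/-- The spectral bound of a real square matrix: the maximum of the real parts of its
complex eigenvalues. -/
noncomputable def specBound {n : ℕ} (M : Matrix (Fin n) (Fin n) ℝ) : ℝ :=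
  sSup (Complex.re '' spectrum ℂ (M.map Complex.ofReal))

/-- The spectral radius of a real square matrix: the maximum of the absolute values of its
complex eigenvalues. -/
noncomputable def specRad {n : ℕ} (M : Matrix (Fin n) (Fin n) ℝ) : ℝ :=
  sSup ((fun z : ℂ => ‖z‖) '' spectrum ℂ (M.map Complex.ofReal))

/-- A matrix is irreducible if for every nonempty proper subset `S` of indices there are
`i ∉ S` and `j ∈ S` with `A i j ≠ 0`. -/
def MatIrreducible {n : ℕ} (A : Matrix (Fin n) (Fin n) ℝ) : Prop :=
  ∀ S : Finset (Fin n), S.Nonempty → S ≠ Finset.univ →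
    ∃ i ∉ S, ∃ j ∈ S, A i j ≠ 0

namespace KarlinAux

open Polynomial

variable {n : ℕ}

/-- membership in matrix spectrum via determinant -/
lemma mem_spec_iff (A : Matrix (Fin n) (Fin n) ℂ) (z : ℂ) :
    z ∈ spectrum ℂ A ↔ (z • (1 : Matrix (Fin n) (Fin n) ℂ) - A).det = 0 := by
  rw [spectrum.mem_iff, Algebra.algebraMap_eq_smul_one, Matrix.isUnit_iff_isUnit_det,
    isUnit_iff_ne_zero, not_ne_iff]

lemma eval_charpoly' (A : Matrix (Fin n) (Fin n) ℂ) (z : ℂ) :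
    (Matrix.charpoly A).eval z = (z • (1 : Matrix (Fin n) (Fin n) ℂ) - A).det := by
  rw [Matrix.charpoly]
  rw [show (Matrix.charmatrix A).det.eval z
      = ((Matrix.charmatrix A).map (Polynomial.evalRingHom z)).det from
    (RingHom.map_det (Polynomial.evalRingHom z) _)]
  congr 1
  ext i j
  by_cases h : i = j
  · subst h
    simp [Matrix.charmatrix_apply_eq, Matrix.one_apply]
  · simp [Matrix.charmatrix_apply_ne _ _ _ h, Matrix.one_apply_ne h]

lemma spec_finite (A : Matrix (Fin n) (Fin n) ℂ) : (spectrum ℂ A).Finite := by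
  rcases Nat.eq_zero_or_pos n with h0 | hpos
  · subst h0
    refine Set.Finite.subset (Set.finite_singleton 0) ?_
    intro z hz
    rw [mem_spec_iff] at hz
    have : (z • (1 : Matrix (Fin 0) (Fin 0) ℂ) - A).det = 1 := Matrix.det_fin_zero
    rw [hz] at this; exact absurd this.symm one_ne_zero
  · have : Nontrivial (Fin n) ∨ True := by
      rcases Nat.lt_or_ge n 2 with h | h
      · exact Or.inr trivial
      · exact Or.inl (Fin.nontrivial_iff_two_le.2 h)
    have hne : Matrix.charpoly A ≠ 0 := (Matrix.charpoly_monic A).ne_zero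
    refine Set.Finite.subset (Polynomial.finite_setOf_isRoot hne) ?_
    intro z hz
    rw [mem_spec_iff] at hz
    simp only [Set.mem_setOf_eq, Polynomial.IsRoot, eval_charpoly', hz]

lemma spec_nonempty (hn : 1 ≤ n) (A : Matrix (Fin n) (Fin n) ℂ) :
    (spectrum ℂ A).Nonempty := by
  have : Nonempty (Fin n) := ⟨⟨0, hn⟩⟩
  have hdeg : (Matrix.charpoly A).degree = Fintype.card (Fin n) :=
    Matrix.charpoly_degree_eq_dim A
  have hdeg' : 0 < (Matrix.charpoly A).degree := by
    rw [hdeg]; simp only [Fintype.card_fin]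
    exact_mod_cast Nat.pos_of_ne_zero (by omega)
  obtain ⟨z, hz⟩ := Complex.exists_root hdeg'
  refine ⟨z, ?_⟩
  rw [mem_spec_iff, ← eval_charpoly']
  exact hz

lemma mem_spec_iff_eigenvector (A : Matrix (Fin n) (Fin n) ℂ) (z : ℂ) :
    z ∈ spectrum ℂ A ↔ ∃ v ≠ 0, A.mulVec v = z • v := by
  rw [mem_spec_iff, ← Matrix.exists_mulVec_eq_zero_iff]
  constructor
  · rintro ⟨v, hv, h⟩
    refine ⟨v, hv, ?_⟩
    have := congrArg (fun w => A.mulVec v + w) h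
    simpa [Matrix.sub_mulVec, Matrix.smul_mulVec, Matrix.one_mulVec] using this.symm
  · rintro ⟨v, hv, h⟩
    refine ⟨v, hv, ?_⟩
    simp [Matrix.sub_mulVec, Matrix.smul_mulVec, Matrix.one_mulVec, h]

noncomputable def rad (A : Matrix (Fin n) (Fin n) ℂ) : ℝ :=
  sSup ((fun z => ‖z‖) '' spectrum ℂ A)

lemma rad_isGreatest (hn : 1 ≤ n) (A : Matrix (Fin n) (Fin n) ℂ) :
    IsGreatest ((fun z => ‖z‖) '' spectrum ℂ A) (rad A) := by
  have hfin : ((fun z => ‖z‖) '' spectrum ℂ A).Finite := (spec_finite A).image _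
  have hne : ((fun z => ‖z‖) '' spectrum ℂ A).Nonempty :=
    (spec_nonempty hn A).image _
  exact ⟨hne.csSup_mem hfin, fun x hx => le_csSup hfin.bddAbove hx⟩

lemma abs_le_rad (hn : 1 ≤ n) {A : Matrix (Fin n) (Fin n) ℂ} {z : ℂ}
    (hz : z ∈ spectrum ℂ A) : ‖z‖ ≤ rad A :=
  (rad_isGreatest hn A).2 ⟨z, hz, rfl⟩

lemma rad_nonneg (hn : 1 ≤ n) (A : Matrix (Fin n) (Fin n) ℂ) : 0 ≤ rad A := by
  obtain ⟨z, hz⟩ := spec_nonempty hn A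
  exact le_trans (norm_nonneg z) (abs_le_rad hn hz)

/-- Easy direction of spectral mapping for powers. -/
lemma pow_mem_spec_pow {A : Matrix (Fin n) (Fin n) ℂ} {z : ℂ}
    (hz : z ∈ spectrum ℂ A) (m : ℕ) (hm : 1 ≤ m) : z ^ m ∈ spectrum ℂ (A ^ m) := by
  rw [mem_spec_iff_eigenvector] at hz ⊢
  obtain ⟨v, hv, hAv⟩ := hz
  refine ⟨v, hv, ?_⟩
  clear hm
  induction m with
  | zero => simp [Matrix.one_mulVec]
  | succ k ih =>
      rw [pow_succ, ← Matrix.mulVec_mulVec, hAv, Matrix.mulVec_smul, ih, pow_succ]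
      ext i; simp [Pi.smul_apply, smul_eq_mul]; ring

/-- Hard direction of spectral mapping for powers. -/
lemma spec_pow_subset (A : Matrix (Fin n) (Fin n) ℂ) (m : ℕ) (hm : 1 ≤ m) :
    spectrum ℂ (A ^ m) ⊆ (fun z => z ^ m) '' spectrum ℂ A := by
  intro μ hμ
  rw [mem_spec_iff] at hμ
  set p : ℂ[X] := X ^ m - C μ with hp
  have hpm : p.Monic := monic_X_pow_sub_C μ (by omega)
  have hsplit : p.Splits := IsAlgClosed.splits p
  have hfact : p = (p.roots.map fun a => X - C a).prod :=
    hsplit.eq_prod_roots_of_monic hpm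
  obtain ⟨l, hl⟩ : ∃ l : List ℂ, (l : Multiset ℂ) = p.roots := Quot.exists_rep p.roots
  have hfactl : p = (l.map fun a => X - C a).prod := by
    conv_lhs => rw [hfact, ← hl]
    simp [Multiset.map_coe, Multiset.prod_coe]
  have haev : Polynomial.aeval A p = A ^ m - μ • (1 : Matrix (Fin n) (Fin n) ℂ) := by
    simp [hp, Algebra.algebraMap_eq_smul_one]
  have haev2 : Polynomial.aeval A p
      = (l.map fun a => A - a • (1 : Matrix (Fin n) (Fin n) ℂ)).prod := by
    conv_lhs => rw [hfactl]
    rw [map_list_prod (Polynomial.aeval A)]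
    congr 1
    rw [List.map_map]
    apply List.map_congr_left
    intro a _
    simp [Algebra.algebraMap_eq_smul_one]
  have hdet0 : (A ^ m - μ • (1 : Matrix (Fin n) (Fin n) ℂ)).det = 0 := by
    rw [show A ^ m - μ • (1 : Matrix (Fin n) (Fin n) ℂ)
        = -(μ • (1 : Matrix (Fin n) (Fin n) ℂ) - A ^ m) from (neg_sub _ _).symm]
    rw [Matrix.det_neg, hμ, mul_zero]
  have hprodl : ((l.map fun a => A - a • (1 : Matrix (Fin n) (Fin n) ℂ)).map
      Matrix.det).prod = 0 := by
    have := MonoidHom.map_list_prod (Matrix.detMonoidHom)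
      (l.map fun a => A - a • (1 : Matrix (Fin n) (Fin n) ℂ))
    simp only [Matrix.coe_detMonoidHom] at this
    rw [← this, ← haev2, haev, hdet0]
  have h0mem := List.prod_eq_zero_iff.mp hprodl
  rw [List.mem_map] at h0mem
  obtain ⟨M, hM, hdz⟩ := h0mem
  rw [List.mem_map] at hM
  obtain ⟨a, ha, rfl⟩ := hM
  have haroot : a ∈ p.roots := by rw [← hl]; exact_mod_cast ha
  refine ⟨a, ?_, ?_⟩
  · rw [mem_spec_iff]
    rw [show a • (1 : Matrix (Fin n) (Fin n) ℂ) - A = -(A - a • 1) from (neg_sub _ _).symm]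
    rw [Matrix.det_neg, hdz, mul_zero]
  · have h := Polynomial.isRoot_of_mem_roots haroot
    simp only [hp, Polynomial.IsRoot, Polynomial.eval_sub, Polynomial.eval_pow,
      Polynomial.eval_X, Polynomial.eval_C] at h
    exact sub_eq_zero.mp h

lemma rad_pow (hn : 1 ≤ n) (A : Matrix (Fin n) (Fin n) ℂ) (m : ℕ) (hm : 1 ≤ m) :
    rad (A ^ m) = rad A ^ m := by
  obtain ⟨⟨z, hz, hzabs⟩, hub⟩ := rad_isGreatest hn A
  have hmem : rad A ^ m ∈ (fun z => ‖z‖) '' spectrum ℂ (A ^ m) := by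
    refine ⟨z ^ m, pow_mem_spec_pow hz m hm, ?_⟩
    simp [norm_pow, hzabs]
  have hub2 : ∀ y ∈ (fun z => ‖z‖) '' spectrum ℂ (A ^ m), y ≤ rad A ^ m := by
    rintro y ⟨w, hw, rfl⟩
    obtain ⟨u, hu, rfl⟩ := spec_pow_subset A m hm hw
    simp only [norm_pow]
    exact pow_le_pow_left₀ (norm_nonneg u) (hub ⟨u, hu, rfl⟩) m
  exact IsGreatest.csSup_eq ⟨hmem, fun y hy => hub2 y hy⟩

lemma spec_transpose (A : Matrix (Fin n) (Fin n) ℂ) :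
    spectrum ℂ Aᵀ = spectrum ℂ A := by
  ext z
  rw [mem_spec_iff, mem_spec_iff]
  rw [show z • (1 : Matrix (Fin n) (Fin n) ℂ) - Aᵀ
      = (z • (1 : Matrix (Fin n) (Fin n) ℂ) - A)ᵀ by
    rw [Matrix.transpose_sub, Matrix.transpose_smul, Matrix.transpose_one]]
  rw [Matrix.det_transpose]

/-- complexification of a real matrix -/
noncomputable def cplx (A : Matrix (Fin n) (Fin n) ℝ) : Matrix (Fin n) (Fin n) ℂ :=
  A.map Complex.ofReal

lemma cplx_mul (A B : Matrix (Fin n) (Fin n) ℝ) : cplx (A * B) = cplx A * cplx B := by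
  ext i j
  simp [cplx, Matrix.mul_apply, Matrix.map_apply]

lemma cplx_pow (A : Matrix (Fin n) (Fin n) ℝ) (m : ℕ) : cplx (A ^ m) = cplx A ^ m := by
  induction m with
  | zero => ext i j; by_cases h : i = j <;> simp [cplx, Matrix.map_apply, Matrix.one_apply, h]
  | succ k ih => rw [pow_succ, pow_succ, cplx_mul, ih]

lemma cplx_det (A : Matrix (Fin n) (Fin n) ℝ) :
    (cplx A).det = Complex.ofReal A.det := by
  have h := RingHom.map_det Complex.ofRealHom A
  rw [RingHom.mapMatrix_apply] at h
  exact h.symm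

/-- a real eigenvalue with real eigenvector is in the complex spectrum -/
lemma real_eig_mem_spec {A : Matrix (Fin n) (Fin n) ℝ} {x : Fin n → ℝ} {t : ℝ}
    (hx : x ≠ 0) (h : A.mulVec x = t • x) : (t : ℂ) ∈ spectrum ℂ (cplx A) := by
  have hdet : (t • (1 : Matrix (Fin n) (Fin n) ℝ) - A).det = 0 := by
    rw [← Matrix.exists_mulVec_eq_zero_iff]
    refine ⟨x, hx, ?_⟩
    rw [Matrix.sub_mulVec, Matrix.smul_mulVec, Matrix.one_mulVec, h, sub_self]
  rw [mem_spec_iff]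
  have : (t : ℂ) • (1 : Matrix (Fin n) (Fin n) ℂ) - cplx A
      = cplx (t • (1 : Matrix (Fin n) (Fin n) ℝ) - A) := by
    ext i j
    by_cases hij : i = j <;>
      simp [cplx, Matrix.map_apply, Matrix.one_apply, hij, Matrix.smul_apply]
  rw [this, cplx_det, hdet, Complex.ofReal_zero]

lemma trace_cplx (A : Matrix (Fin n) (Fin n) ℝ) :
    Matrix.trace (cplx A) = Complex.ofReal (Matrix.trace A) := by
  simp [Matrix.trace, cplx, Matrix.map_apply, Matrix.diag, Complex.ofReal_sum]

lemma trace_pow_le (hn : 1 ≤ n) (A : Matrix (Fin n) (Fin n) ℝ) (m : ℕ) (hm : 1 ≤ m) :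
    Matrix.trace (A ^ m) ≤ (n : ℝ) * rad (cplx A) ^ m := by
  have hnonempty : Nonempty (Fin n) := ⟨⟨0, hn⟩⟩
  set C : Matrix (Fin n) (Fin n) ℂ := cplx A ^ m with hC
  have htr : Matrix.trace C = (Matrix.charpoly C).roots.sum :=
    Matrix.trace_eq_sum_roots_charpoly C
  have hroot_bound : ∀ z ∈ (Matrix.charpoly C).roots, ‖z‖ ≤ rad (cplx A) ^ m := by
    intro z hz
    have hz' : z ∈ spectrum ℂ C := by
      rw [mem_spec_iff, ← eval_charpoly']
      exact Polynomial.isRoot_of_mem_roots hz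
    have := abs_le_rad hn hz'
    rwa [hC, rad_pow hn _ m hm] at this
  have habs : ‖Matrix.trace C‖ ≤ (n : ℝ) * rad (cplx A) ^ m := by
    rw [htr]
    calc ‖(Matrix.charpoly C).roots.sum‖
        = ‖(Matrix.charpoly C).roots.sum‖ := rfl
      _ ≤ ((Matrix.charpoly C).roots.map (fun z => ‖z‖)).sum := norm_multiset_sum_le _
      _ ≤ ((Matrix.charpoly C).roots.map (fun z => ‖z‖)).card • (rad (cplx A) ^ m) := by
          apply Multiset.sum_le_card_nsmul
          intro x hx
          rw [Multiset.mem_map] at hx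
          obtain ⟨z, hz, rfl⟩ := hx
          exact hroot_bound z hz
      _ ≤ (n : ℝ) * rad (cplx A) ^ m := by
          rw [nsmul_eq_mul, Multiset.card_map]
          apply mul_le_mul_of_nonneg_right
          · have h1 : ((Matrix.charpoly C).roots.card : ℝ) ≤ ((Matrix.charpoly C).natDegree : ℝ) := by
              exact_mod_cast (Matrix.charpoly C).card_roots'
            have h2 : (Matrix.charpoly C).natDegree = n := by
              rw [Matrix.charpoly_natDegree_eq_dim, Fintype.card_fin]
            rw [h2] at h1; exact h1
          · exact pow_nonneg (rad_nonneg hn _) m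
  have htrR : Matrix.trace C = Complex.ofReal (Matrix.trace (A ^ m)) := by
    rw [hC, ← cplx_pow, trace_cplx]
  calc Matrix.trace (A ^ m) ≤ |Matrix.trace (A ^ m)| := le_abs_self _
    _ = ‖Matrix.trace C‖ := by rw [htrR, Complex.norm_real, Real.norm_eq_abs]
    _ ≤ (n : ℝ) * rad (cplx A) ^ m := habs

lemma pow_entry_nonneg {A : Matrix (Fin n) (Fin n) ℝ} (hA : ∀ i j, 0 ≤ A i j) :
    ∀ k i j, 0 ≤ (A ^ k) i j := by
  intro k
  induction k with
  | zero => intro i j; by_cases h : i = j <;> simp [Matrix.one_apply, h]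
  | succ k ih =>
      intro i j
      rw [pow_succ, Matrix.mul_apply]
      exact Finset.sum_nonneg fun l _ => mul_nonneg (ih i l) (hA l j)

lemma key_lower_bound (hn : 1 ≤ n) {A : Matrix (Fin n) (Fin n) ℝ} {δ c : ℝ}
    (hδ : 0 < δ) (hA : ∀ i j, δ ≤ A i j) {w : Fin n → ℝ} (hw : ∀ i, 0 < w i) (hc : 0 < c)
    (h : ∀ i, c * w i ≤ A.mulVec w i) : c ≤ rad (cplx A) := by
  have hnonempty : Nonempty (Fin n) := ⟨⟨0, hn⟩⟩
  have hA0 : ∀ i j, 0 ≤ A i j := fun i j => le_trans hδ.le (hA i j)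
  have hAk := pow_entry_nonneg hA0
  -- iterated bound
  have hwk : ∀ k i, c ^ k * w i ≤ (A ^ k).mulVec w i := by
    intro k
    induction k with
    | zero => intro i; simp [Matrix.mulVec, dotProduct, Matrix.one_apply]
    | succ k ih =>
        intro i
        have hstep : (A ^ (k+1)).mulVec w i = A.mulVec ((A ^ k).mulVec w) i := by
          rw [pow_succ', Matrix.mulVec_mulVec]
        rw [hstep]
        have h1 : ∀ j, c ^ k * w j ≤ (A ^ k).mulVec w j := ih
        have h2 : A.mulVec (fun j => c ^ k * w j) i ≤ A.mulVec ((A ^ k).mulVec w) i := by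
          simp only [Matrix.mulVec, dotProduct]
          exact Finset.sum_le_sum fun j _ => mul_le_mul_of_nonneg_left (h1 j) (hA0 i j)
        have h3 : A.mulVec (fun j => c ^ k * w j) i = c ^ k * A.mulVec w i := by
          simp only [Matrix.mulVec, dotProduct, Finset.mul_sum]
          exact Finset.sum_congr rfl fun j _ => by ring
        calc c ^ (k+1) * w i = c ^ k * (c * w i) := by ring
          _ ≤ c ^ k * A.mulVec w i := by
              apply mul_le_mul_of_nonneg_left (h i) (pow_nonneg hc.le k)
          _ = A.mulVec (fun j => c ^ k * w j) i := h3.symm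
          _ ≤ A.mulVec ((A ^ k).mulVec w) i := h2
  -- total sum bound
  have hW : 0 < ∑ i, w i := Finset.sum_pos (fun i _ => hw i) Finset.univ_nonempty
  have hTk : ∀ k, c ^ k ≤ ∑ j, ∑ l, (A ^ k) j l := by
    intro k
    have ha : c ^ k * (∑ i, w i) ≤ ∑ j, ∑ l, (A ^ k) j l * w l := by
      rw [Finset.mul_sum]
      apply Finset.sum_le_sum
      intro j _
      exact le_trans (hwk k j) (le_of_eq rfl)
    have hb : ∑ j, ∑ l, (A ^ k) j l * w l ≤ (∑ j, ∑ l, (A ^ k) j l) * (∑ i, w i) := by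
      rw [Finset.sum_mul]
      apply Finset.sum_le_sum
      intro j _
      rw [Finset.sum_mul]
      apply Finset.sum_le_sum
      intro l _
      apply mul_le_mul_of_nonneg_left _ (hAk k j l)
      exact Finset.single_le_sum (fun i _ => (hw i).le) (Finset.mem_univ l)
    have := le_trans ha hb
    nlinarith
  -- trace lower bound
  have htrace_lb : ∀ k : ℕ, δ ^ 2 * c ^ k ≤ Matrix.trace (A ^ (k + 2)) := by
    intro k
    obtain ⟨i₀⟩ := hnonempty
    have hinner : ∀ j, δ * (∑ l, (A ^ k) j l) ≤ ((A ^ k) * A) j i₀ := by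
      intro j
      rw [Matrix.mul_apply, Finset.mul_sum]
      apply Finset.sum_le_sum
      intro l _
      rw [mul_comm δ _]
      exact mul_le_mul_of_nonneg_left (hA l i₀) (hAk k j l)
    have hdiag : δ ^ 2 * (∑ j, ∑ l, (A ^ k) j l) ≤ (A ^ (k + 2)) i₀ i₀ := by
      have hexp : (A ^ (k + 2)) = A * ((A ^ k) * A) := by
        rw [← pow_succ, ← pow_succ']
      rw [hexp, Matrix.mul_apply, Finset.mul_sum]
      apply Finset.sum_le_sum
      intro j _
      have hs : 0 ≤ ∑ l, (A ^ k) j l := Finset.sum_nonneg fun l _ => hAk k j l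
      have h1 : δ ^ 2 * (∑ l, (A ^ k) j l) = δ * (δ * (∑ l, (A ^ k) j l)) := by ring
      rw [h1]
      apply mul_le_mul (hA i₀ j) (hinner j) (by positivity) (le_trans hδ.le (hA i₀ j))
    have htr : (A ^ (k + 2)) i₀ i₀ ≤ Matrix.trace (A ^ (k + 2)) := by
      rw [Matrix.trace]
      exact Finset.single_le_sum (fun i _ => pow_entry_nonneg hA0 (k+2) i i)
        (Finset.mem_univ i₀)
    calc δ ^ 2 * c ^ k ≤ δ ^ 2 * (∑ j, ∑ l, (A ^ k) j l) := by
          apply mul_le_mul_of_nonneg_left (hTk k) (by positivity)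
      _ ≤ (A ^ (k + 2)) i₀ i₀ := hdiag
      _ ≤ Matrix.trace (A ^ (k + 2)) := htr
  -- combine with upper bound
  set ρ := rad (cplx A) with hρ
  have hkey : ∀ k : ℕ, δ ^ 2 * c ^ k ≤ (n : ℝ) * ρ ^ (k + 2) :=
    fun k => le_trans (htrace_lb k) (trace_pow_le hn A (k+2) (by omega))
  have hρ0 : 0 ≤ ρ := rad_nonneg hn (cplx A)
  by_contra hlt
  push_neg at hlt
  have hρpos : 0 < ρ := by
    rcases lt_or_eq_of_le hρ0 with h' | h'
    · exact h'
    · exfalso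
      have := hkey 0
      rw [← h'] at this
      simp at this
      nlinarith
  have hratio : 1 < c / ρ := (one_lt_div hρpos).2 hlt
  have htend := tendsto_pow_atTop_atTop_of_one_lt hratio
  obtain ⟨k, hk⟩ := (Filter.tendsto_atTop.mp htend ((n : ℝ) * ρ ^ 2 / δ ^ 2 + 1)) |>.exists
  have hkk := hkey k
  have hck : c ^ k = (c / ρ) ^ k * ρ ^ k := by
    rw [div_pow, div_mul_cancel₀ _ (pow_ne_zero k hρpos.ne')]
  have hρk : (0:ℝ) < ρ ^ k := pow_pos hρpos k
  have h2 : δ ^ 2 * ((c / ρ) ^ k * ρ ^ k) ≤ (n : ℝ) * (ρ ^ 2 * ρ ^ k) := by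
    rw [← hck]
    calc δ ^ 2 * c ^ k ≤ (n : ℝ) * ρ ^ (k + 2) := hkk
      _ = (n : ℝ) * (ρ ^ 2 * ρ ^ k) := by rw [pow_add]; ring
  have h3 : δ ^ 2 * (c / ρ) ^ k ≤ (n : ℝ) * ρ ^ 2 :=
    le_of_mul_le_mul_right (by nlinarith) hρk
  have h4 : (c / ρ) ^ k ≤ (n : ℝ) * ρ ^ 2 / δ ^ 2 := by
    rw [le_div_iff₀ (by positivity)]
    nlinarith
  linarith

/-- Perron's theorem, existence part, for strictly positive matrices. -/
theorem perron_positive (hn : 1 ≤ n) {A : Matrix (Fin n) (Fin n) ℝ}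
    (hA : ∀ i j, 0 < A i j) :
    0 < rad (cplx A) ∧ ∃ x : Fin n → ℝ, (∀ i, 0 < x i) ∧
      A.mulVec x = rad (cplx A) • x := by
  have hnonempty : Nonempty (Fin n) := ⟨⟨0, hn⟩⟩
  set ρ := rad (cplx A) with hρdef
  -- get an eigenvalue of maximal modulus with eigenvector
  obtain ⟨⟨lam, hlam, hlamabs⟩, _⟩ := rad_isGreatest hn (cplx A)
  obtain ⟨v, hv0, hAv⟩ := (mem_spec_iff_eigenvector (cplx A) lam).mp hlam
  set u : Fin n → ℝ := fun i => ‖v i‖ with hu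
  have hu0 : ∀ i, 0 ≤ u i := fun i => norm_nonneg _
  have hune : ∃ i, 0 < u i := by
    by_contra hcon
    push_neg at hcon
    apply hv0
    funext i
    have h1 : u i = 0 := le_antisymm (hcon i) (hu0 i)
    simpa [hu, norm_eq_zero] using h1
  -- subinvariance: ρ * u ≤ A.mulVec u
  have hsub : ∀ i, ρ * u i ≤ A.mulVec u i := by
    intro i
    have h1 : (cplx A).mulVec v i = lam * v i := by
      rw [hAv]; simp [Pi.smul_apply, smul_eq_mul]
    have h2 : ‖lam * v i‖ = ρ * u i := by
      rw [norm_mul]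
      show ‖lam‖ * ‖v i‖ = ρ * u i
      rw [show ‖lam‖ = ρ from hlamabs]
    have h3 : ‖(cplx A).mulVec v i‖ ≤ A.mulVec u i := by
      rw [Matrix.mulVec, dotProduct]
      calc ‖∑ j, cplx A i j * v j‖
          ≤ ∑ j, ‖cplx A i j * v j‖ := norm_sum_le _ _
        _ = ∑ j, A i j * u j := by
            apply Finset.sum_congr rfl
            intro j _
            rw [norm_mul]
            congr 1
            simp [cplx, Matrix.map_apply, Complex.norm_real, Real.norm_eq_abs, abs_of_pos (hA i j)]
        _ = A.mulVec u i := rfl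
    rw [← h2, ← h1]
    exact h3
  -- w := A u is strictly positive
  have hw : ∀ i, 0 < A.mulVec u i := by
    intro i
    obtain ⟨j₀, hj₀⟩ := hune
    rw [Matrix.mulVec, dotProduct]
    have : 0 < A i j₀ * u j₀ := mul_pos (hA i j₀) hj₀
    apply Finset.sum_pos' (fun j _ => mul_nonneg (hA i j).le (hu0 j)) ⟨j₀, Finset.mem_univ _, this⟩
  -- show A u = ρ u
  have heq : A.mulVec u = ρ • u := by
    by_contra hne
    -- d := A u - ρ u is nonneg, nonzero
    set d : Fin n → ℝ := fun i => A.mulVec u i - ρ * u i with hd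
    have hd0 : ∀ i, 0 ≤ d i := fun i => sub_nonneg.2 (hsub i)
    have hdne : ∃ i, 0 < d i := by
      by_contra hcon
      push_neg at hcon
      apply hne
      funext i
      have : d i = 0 := le_antisymm (hcon i) (hd0 i)
      have := sub_eq_zero.mp this
      simp [Pi.smul_apply, smul_eq_mul]
      linarith [this]
    obtain ⟨j₁, hj₁⟩ := hdne
    set w : Fin n → ℝ := A.mulVec u with hwdef
    have hAd : ∀ i, 0 < A.mulVec d i := by
      intro i
      rw [Matrix.mulVec, dotProduct]
      apply Finset.sum_pos' (fun j _ => mul_nonneg (hA i j).le (hd0 j))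
        ⟨j₁, Finset.mem_univ _, mul_pos (hA i j₁) hj₁⟩
    have hAw : ∀ i, ρ * w i + A.mulVec d i ≤ A.mulVec w i := by
      intro i
      have : A.mulVec w i = A.mulVec (fun j => ρ * u j) i + A.mulVec d i := by
        simp only [Matrix.mulVec, dotProduct, ← Finset.sum_add_distrib]
        apply Finset.sum_congr rfl
        intro j _
        simp only [hd]
        ring
      rw [this]
      have h4 : A.mulVec (fun j => ρ * u j) i = ρ * A.mulVec u i := by
        simp only [Matrix.mulVec, dotProduct, Finset.mul_sum]
        apply Finset.sum_congr rfl
        intro j _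
        ring
      rw [h4]
    -- choose c = min over i of (A w)_i / w_i > ρ
    have hcand : ∀ i, ρ < A.mulVec w i / w i := by
      intro i
      rw [lt_div_iff₀ (hw i)]
      calc ρ * w i < ρ * w i + A.mulVec d i := by linarith [hAd i]
        _ ≤ A.mulVec w i := hAw i
    set c : ℝ := Finset.univ.inf' Finset.univ_nonempty (fun i => A.mulVec w i / w i) with hc
    have hcρ : ρ < c := by
      rw [hc, Finset.lt_inf'_iff]
      intro i _
      exact hcand i
    have hcpos : 0 < c := lt_of_le_of_lt (rad_nonneg hn (cplx A)) hcρ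
    have hcw : ∀ i, c * w i ≤ A.mulVec w i := by
      intro i
      have : c ≤ A.mulVec w i / w i := Finset.inf'_le _ (Finset.mem_univ i)
      rw [← le_div_iff₀ (hw i)] at *
      exact this
    obtain ⟨i₂j₂, hδ⟩ : ∃ p : Fin n × Fin n, ∀ q : Fin n × Fin n, A p.1 p.2 ≤ A q.1 q.2 := by
      obtain ⟨p, _, hp⟩ := Finset.exists_min_image Finset.univ (fun p : Fin n × Fin n => A p.1 p.2)
        (by simp [Finset.univ_nonempty])
      exact ⟨p, fun q => hp q (Finset.mem_univ q)⟩
    have hkey := key_lower_bound hn (A := A) (δ := A i₂j₂.1 i₂j₂.2)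
      (hA i₂j₂.1 i₂j₂.2) (fun i j => hδ (i, j)) hw hcpos hcw
    rw [← hρdef] at hkey
    linarith
  -- conclude positivity of ρ and u
  have hρu : ∀ i, ρ * u i = A.mulVec u i := by
    intro i
    rw [heq]
    simp [Pi.smul_apply, smul_eq_mul]
  have hρpos : 0 < ρ := by
    obtain ⟨j₀, hj₀⟩ := hune
    have := hρu j₀
    have h2 := hw j₀
    nlinarith
  have hupos : ∀ i, 0 < u i := by
    intro i
    have := hρu i
    have h2 := hw i
    nlinarith
  exact ⟨hρpos, u, hupos, heq⟩

/-- positive eigenvectors of a positive matrix for the same eigenvalue are proportional -/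
lemma positive_eigenvector_unique (hn : 1 ≤ n) {A : Matrix (Fin n) (Fin n) ℝ}
    (hA : ∀ i j, 0 < A i j) {ρ : ℝ} (hρ : 0 < ρ) {x y : Fin n → ℝ}
    (hx : ∀ i, 0 < x i) (hy : ∀ i, 0 < y i)
    (hxe : A.mulVec x = ρ • x) (hye : A.mulVec y = ρ • y) :
    ∃ t : ℝ, 0 < t ∧ y = t • x := by
  have hnonempty : Nonempty (Fin n) := ⟨⟨0, hn⟩⟩
  obtain ⟨i₀, _, hmin⟩ := Finset.exists_min_image Finset.univ (fun i => y i / x i)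
    (by simp [Finset.univ_nonempty])
  set t := y i₀ / x i₀ with ht
  have htpos : 0 < t := div_pos (hy i₀) (hx i₀)
  set z : Fin n → ℝ := fun i => y i - t * x i with hz
  have hz0 : ∀ i, 0 ≤ z i := by
    intro i
    have h2 : t ≤ y i / x i := hmin i (Finset.mem_univ i)
    rw [le_div_iff₀ (hx i)] at h2
    show (0:ℝ) ≤ y i - t * x i
    linarith
  have hzi₀ : z i₀ = 0 := by
    show y i₀ - t * x i₀ = 0
    rw [ht, div_mul_cancel₀ _ (hx i₀).ne']
    ring
  have hAz : A.mulVec z = ρ • z := by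
    funext i
    have h1 : A.mulVec z i = A.mulVec y i - t * A.mulVec x i := by
      simp only [hz, Matrix.mulVec, dotProduct, Finset.mul_sum, ← Finset.sum_sub_distrib]
      apply Finset.sum_congr rfl
      intro j _
      ring
    rw [h1, hxe, hye]
    simp [Pi.smul_apply, smul_eq_mul, hz]
    ring
  by_cases hcase : z = 0
  · refine ⟨t, htpos, ?_⟩
    funext i
    have h5 : z i = 0 := by rw [hcase]; rfl
    have h6 : y i - t * x i = 0 := h5
    simp only [Pi.smul_apply, smul_eq_mul]
    linarith
  · exfalso
    have hzne : ∃ j, 0 < z j := by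
      by_contra hcon
      push_neg at hcon
      apply hcase
      funext j
      exact le_antisymm (hcon j) (hz0 j)
    obtain ⟨j₁, hj₁⟩ := hzne
    have : 0 < A.mulVec z i₀ := by
      rw [Matrix.mulVec, dotProduct]
      apply Finset.sum_pos' (fun j _ => mul_nonneg (hA i₀ j).le (hz0 j))
        ⟨j₁, Finset.mem_univ _, mul_pos (hA i₀ j₁) hj₁⟩
    rw [hAz] at this
    simp [Pi.smul_apply, smul_eq_mul, hzi₀] at this

/-- an irreducible nonnegative matrix with positive diagonal is primitive -/
lemma primitivity (hn : 2 ≤ n) {B : Matrix (Fin n) (Fin n) ℝ}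
    (hB0 : ∀ i j, 0 ≤ B i j) (hBdiag : ∀ i, 0 < B i i) (hirr : MatIrreducible B) :
    ∀ i j, 0 < (B ^ (n - 1)) i j := by
  have hnonempty : Nonempty (Fin n) := ⟨⟨0, by omega⟩⟩
  intro i j
  -- define S k = set of i with (B^k) i j > 0
  set S : ℕ → Finset (Fin n) := fun k => Finset.univ.filter (fun i => 0 < (B ^ k) i j) with hS
  have hmemS : ∀ k i, i ∈ S k ↔ 0 < (B ^ k) i j := by
    intro k i; simp [hS]
  have hj0 : j ∈ S 0 := by
    rw [hmemS]
    simp [Matrix.one_apply]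
  have hmono : ∀ k, S k ⊆ S (k + 1) := by
    intro k i hi
    rw [hmemS] at hi ⊢
    have : (B ^ (k+1)) i j = ∑ l, B i l * (B ^ k) l j := by
      rw [pow_succ', Matrix.mul_apply]
    rw [this]
    apply Finset.sum_pos' (fun l _ => mul_nonneg (hB0 i l) (pow_entry_nonneg hB0 k l j))
    exact ⟨i, Finset.mem_univ i, mul_pos (hBdiag i) hi⟩
  have hj : ∀ k, j ∈ S k := by
    intro k
    induction k with
    | zero => exact hj0
    | succ m ih => exact hmono m ih
  have hgrow : ∀ k, S k ≠ Finset.univ → (S k).card + 1 ≤ (S (k + 1)).card := by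
    intro k hne
    obtain ⟨i', hi'n, l, hl, hBil⟩ := hirr (S k) ⟨j, hj k⟩ hne
    have hi'in : i' ∈ S (k + 1) := by
      rw [hmemS]
      have hexp : (B ^ (k+1)) i' j = ∑ m, B i' m * (B ^ k) m j := by
        rw [pow_succ', Matrix.mul_apply]
      rw [hexp]
      apply Finset.sum_pos' (fun m _ => mul_nonneg (hB0 i' m) (pow_entry_nonneg hB0 k m j))
      refine ⟨l, Finset.mem_univ l, mul_pos ?_ ((hmemS k l).mp hl)⟩
      exact lt_of_le_of_ne (hB0 i' l) (Ne.symm hBil)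
    have hsub : insert i' (S k) ⊆ S (k + 1) := by
      intro a ha
      rcases Finset.mem_insert.mp ha with rfl | ha'
      · exact hi'in
      · exact hmono k ha'
    calc (S k).card + 1 = (insert i' (S k)).card := (Finset.card_insert_of_notMem hi'n).symm
      _ ≤ (S (k + 1)).card := Finset.card_le_card hsub
  have hcard : ∀ k, S k = Finset.univ ∨ k + 1 ≤ (S k).card := by
    intro k
    induction k with
    | zero =>
        right
        exact Finset.card_pos.mpr ⟨j, hj 0⟩
    | succ m ih =>
        by_cases hm : S m = Finset.univ
        · left
          apply Finset.eq_univ_of_forall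
          intro a
          exact hmono m (hm ▸ Finset.mem_univ a)
        · rcases ih with h | h
          · exact absurd h hm
          · right
            calc m + 1 + 1 ≤ (S m).card + 1 := by omega
              _ ≤ (S (m + 1)).card := hgrow m hm
  have huniv : S (n - 1) = Finset.univ := by
    rcases hcard (n - 1) with h | h
    · exact h
    · apply Finset.eq_univ_of_card
      have h1 : (S (n-1)).card ≤ n := by
        calc (S (n-1)).card ≤ Finset.univ.card := Finset.card_le_univ _
          _ = n := by simp
      have h2 : n ≤ (S (n-1)).card := by omega
      rw [Fintype.card_fin]
      omega
  have : i ∈ S (n - 1) := huniv ▸ Finset.mem_univ i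
  exact (hmemS (n-1) i).mp this

/-- Perron–Frobenius for irreducible nonnegative matrices with positive diagonal -/
theorem perron_frobenius (hn : 2 ≤ n) {B : Matrix (Fin n) (Fin n) ℝ}
    (hB0 : ∀ i j, 0 ≤ B i j) (hBdiag : ∀ i, 0 < B i i) (hirr : MatIrreducible B) :
    0 < rad (cplx B) ∧ ∃ x : Fin n → ℝ, (∀ i, 0 < x i) ∧
      B.mulVec x = rad (cplx B) • x := by
  have hn1 : 1 ≤ n := by omega
  set m := n - 1 with hm
  have hm1 : 1 ≤ m := by omega
  set A := B ^ m with hA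
  have hApos : ∀ i j, 0 < A i j := primitivity hn hB0 hBdiag hirr
  obtain ⟨hρA, x, hx, hxe⟩ := perron_positive hn1 hApos
  set ρA := rad (cplx A) with hρAdef
  -- x' := B x is a positive eigenvector of A as well
  set x' : Fin n → ℝ := B.mulVec x with hx'
  have hx'pos : ∀ i, 0 < x' i := by
    intro i
    rw [hx', Matrix.mulVec, dotProduct]
    apply Finset.sum_pos' (fun l _ => mul_nonneg (hB0 i l) (hx l).le)
    exact ⟨i, Finset.mem_univ i, mul_pos (hBdiag i) (hx i)⟩
  have hx'e : A.mulVec x' = ρA • x' := by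
    rw [hx', Matrix.mulVec_mulVec]
    have hcomm : A * B = B * A := by rw [hA, ← pow_succ, ← pow_succ']
    rw [hcomm, ← Matrix.mulVec_mulVec, hxe, Matrix.mulVec_smul]
  obtain ⟨t, htpos, hxt⟩ := positive_eigenvector_unique hn1 hApos hρA hx hx'pos hxe hx'e
  have hBx : B.mulVec x = t • x := by rw [← hx', hxt]
  -- t^m = ρA
  have htm : t ^ m = ρA := by
    have h1 : ∀ k, (B ^ k).mulVec x = t ^ k • x := by
      intro k
      induction k with
      | zero => simp [Matrix.one_mulVec]
      | succ l ih =>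
          rw [pow_succ', ← Matrix.mulVec_mulVec, ih, Matrix.mulVec_smul, hBx, smul_smul,
            pow_succ]
    have h2 := h1 m
    rw [← hA, hxe] at h2
    obtain ⟨i₀⟩ : Nonempty (Fin n) := ⟨⟨0, by omega⟩⟩
    have h3 := congrFun h2 i₀
    simp only [Pi.smul_apply, smul_eq_mul] at h3
    exact (mul_right_cancel₀ (hx i₀).ne' h3).symm
  -- ρA = rad(cplx B) ^ m
  have hradm : ρA = rad (cplx B) ^ m := by
    rw [hρAdef, hA, cplx_pow, rad_pow hn1 _ m hm1]
  -- t ≤ rad (cplx B)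
  have htle : t ≤ rad (cplx B) := by
    have hxne : x ≠ 0 := by
      intro hcon
      obtain ⟨i₀⟩ : Nonempty (Fin n) := ⟨⟨0, by omega⟩⟩
      have := hx i₀
      rw [hcon] at this
      exact lt_irrefl 0 this
    have hmem := real_eig_mem_spec hxne hBx
    have := abs_le_rad hn1 hmem
    rwa [Complex.norm_real, Real.norm_eq_abs, abs_of_pos htpos] at this
  -- conclude t = rad (cplx B)
  have hρB0 : 0 < rad (cplx B) := lt_of_lt_of_le htpos htle
  have hteq : t = rad (cplx B) := by
    by_contra hne
    have hlt : t < rad (cplx B) := lt_of_le_of_ne htle hne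
    have : t ^ m < rad (cplx B) ^ m := by
      apply pow_lt_pow_left₀ hlt htpos.le
      omega
    rw [htm, hradm] at this
    exact lt_irrefl _ this
  exact ⟨hρB0, x, hx, by rw [← hteq]; exact hBx⟩

/-- finite Jensen for log, non-strict -/
lemma jensen_log {t : Finset (Fin n)} {w p : Fin n → ℝ} (hw : ∀ i ∈ t, 0 ≤ w i)
    (h1 : ∑ i ∈ t, w i = 1) (hp : ∀ i ∈ t, 0 < p i) :
    ∑ i ∈ t, w i * Real.log (p i) ≤ Real.log (∑ i ∈ t, w i * p i) := by
  have := (strictConcaveOn_log_Ioi.concaveOn).le_map_sum (t := t) (w := w) (p := p)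
    hw h1 (fun i hi => Set.mem_Ioi.mpr (hp i hi))
  simpa [smul_eq_mul] using this

/-- finite Jensen for log, strict -/
lemma jensen_log_strict {t : Finset (Fin n)} {w p : Fin n → ℝ} (hw : ∀ i ∈ t, 0 < w i)
    (h1 : ∑ i ∈ t, w i = 1) (hp : ∀ i ∈ t, 0 < p i)
    (hne : ∃ a ∈ t, ∃ b ∈ t, p a ≠ p b) :
    ∑ i ∈ t, w i * Real.log (p i) < Real.log (∑ i ∈ t, w i * p i) := by
  have := strictConcaveOn_log_Ioi.lt_map_sum (t := t) (w := w) (p := p)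
    hw h1 (fun i hi => Set.mem_Ioi.mpr (hp i hi)) hne
  simpa [smul_eq_mul] using this

section ColRow

variable {B : Matrix (Fin n) (Fin n) ℝ} {ρ : ℝ} {r x z u : Fin n → ℝ}

lemma support_sum (j : Fin n) (g : Fin n → ℝ) :
    ∑ i ∈ Finset.univ.filter (fun i => B i j ≠ 0), B i j * g i = ∑ i, B i j * g i := by
  apply Finset.sum_subset (Finset.subset_univ _)
  intro i _ hi
  simp only [Finset.mem_filter, Finset.mem_univ, true_and, not_not] at hi
  rw [hi, zero_mul]

lemma support_sum_row (i : Fin n) (g : Fin n → ℝ) :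
    ∑ j ∈ Finset.univ.filter (fun j => B i j ≠ 0), B i j * g j = ∑ j, B i j * g j := by
  apply Finset.sum_subset (Finset.subset_univ _)
  intro j _ hj
  simp only [Finset.mem_filter, Finset.mem_univ, true_and, not_not] at hj
  rw [hj, zero_mul]

/-- column Jensen inequality, non-strict -/
lemma col_jensen (hB0 : ∀ i j, 0 ≤ B i j) (hρ : 0 < ρ) (hz : ∀ i, 0 < z i)
    (j : Fin n) (hrj : 0 < r j) (hcolj : ∑ i, B i j = r j)
    (hleftj : ∑ i, B i j * z i = ρ * z j) :
    ∑ i, B i j * z i * (Real.log (z j) - Real.log (z i))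
      ≤ ρ * z j * (Real.log (r j) - Real.log ρ) := by
  classical
  set F := Finset.univ.filter (fun i => B i j ≠ 0) with hF
  set w : Fin n → ℝ := fun i => B i j * z i / (ρ * z j) with hw
  set p : Fin n → ℝ := fun i => z j / z i with hp
  have hzj : 0 < ρ * z j := mul_pos hρ (hz j)
  have hw0 : ∀ i ∈ F, 0 ≤ w i := fun i _ =>
    div_nonneg (mul_nonneg (hB0 i j) (hz i).le) hzj.le
  have h1 : ∑ i ∈ F, w i = 1 := by
    rw [hw]
    simp only [← Finset.sum_div]
    rw [hF, support_sum j z, hleftj, div_self hzj.ne']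
  have hppos : ∀ i ∈ F, 0 < p i := fun i _ => div_pos (hz j) (hz i)
  have hJ := jensen_log hw0 h1 hppos
  have hwp : ∑ i ∈ F, w i * p i = r j / ρ := by
    have hpt : ∀ i ∈ F, w i * p i = B i j * (1/ρ) := by
      intro i _
      rw [hw, hp]
      have h1' := (hz i).ne'
      have h2' := (hz j).ne'
      have h3' := hρ.ne'
      field_simp
    rw [Finset.sum_congr rfl hpt, ← Finset.sum_mul]
    have : ∑ i ∈ F, B i j = ∑ i, B i j := by
      have := support_sum (B := B) j (fun _ => 1)
      simpa using this
    rw [this, hcolj]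
    ring
  rw [hwp] at hJ
  rw [Real.log_div hrj.ne' hρ.ne'] at hJ
  have hlhs : ∑ i, B i j * z i * (Real.log (z j) - Real.log (z i))
      = (ρ * z j) * ∑ i ∈ F, w i * Real.log (p i) := by
    rw [Finset.mul_sum]
    rw [show ∑ i, B i j * z i * (Real.log (z j) - Real.log (z i))
        = ∑ i, B i j * (z i * (Real.log (z j) - Real.log (z i))) from
      Finset.sum_congr rfl fun i _ => by ring]
    rw [← support_sum (B := B) j (fun i => z i * (Real.log (z j) - Real.log (z i)))]
    apply Finset.sum_congr rfl
    intro i hi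
    rw [hw, hp, Real.log_div (hz j).ne' (hz i).ne']
    have h1' := (hz j).ne'
    have h3' := hρ.ne'
    field_simp
  rw [hlhs]
  calc (ρ * z j) * ∑ i ∈ F, w i * Real.log (p i)
      ≤ (ρ * z j) * (Real.log (r j) - Real.log ρ) := by
        apply mul_le_mul_of_nonneg_left hJ hzj.le
    _ = ρ * z j * (Real.log (r j) - Real.log ρ) := by ring

/-- column Jensen inequality, strict version -/
lemma col_jensen_strict (hB0 : ∀ i j, 0 ≤ B i j) (hρ : 0 < ρ) (hz : ∀ i, 0 < z i)
    (j : Fin n) (hrj : 0 < r j) (hcolj : ∑ i, B i j = r j)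
    (hleftj : ∑ i, B i j * z i = ρ * z j)
    (hBjj : 0 < B j j) {i₀ : Fin n} (hBi₀ : B i₀ j ≠ 0) (hzne : z i₀ ≠ z j) :
    ∑ i, B i j * z i * (Real.log (z j) - Real.log (z i))
      < ρ * z j * (Real.log (r j) - Real.log ρ) := by
  classical
  set F := Finset.univ.filter (fun i => B i j ≠ 0) with hF
  set w : Fin n → ℝ := fun i => B i j * z i / (ρ * z j) with hw
  set p : Fin n → ℝ := fun i => z j / z i with hp
  have hzj : 0 < ρ * z j := mul_pos hρ (hz j)
  have hw0 : ∀ i ∈ F, 0 < w i := by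
    intro i hi
    rw [hF, Finset.mem_filter] at hi
    exact div_pos (mul_pos (lt_of_le_of_ne (hB0 i j) (Ne.symm hi.2)) (hz i)) hzj
  have h1 : ∑ i ∈ F, w i = 1 := by
    rw [hw]
    simp only [← Finset.sum_div]
    rw [hF, support_sum j z, hleftj, div_self hzj.ne']
  have hppos : ∀ i ∈ F, 0 < p i := fun i _ => div_pos (hz j) (hz i)
  have hmemi₀ : i₀ ∈ F := by rw [hF]; simp [hBi₀]
  have hmemj : j ∈ F := by rw [hF]; simp [hBjj.ne']
  have hpne : p i₀ ≠ p j := by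
    rw [hp]
    simp only
    rw [div_self (hz j).ne']
    intro hcon
    apply hzne
    rw [div_eq_one_iff_eq (hz i₀).ne'] at hcon
    exact hcon.symm
  have hJ := jensen_log_strict hw0 h1 hppos ⟨i₀, hmemi₀, j, hmemj, hpne⟩
  have hwp : ∑ i ∈ F, w i * p i = r j / ρ := by
    have hpt : ∀ i ∈ F, w i * p i = B i j * (1/ρ) := by
      intro i _
      rw [hw, hp]
      have h1' := (hz i).ne'
      have h2' := (hz j).ne'
      have h3' := hρ.ne'
      field_simp
    rw [Finset.sum_congr rfl hpt, ← Finset.sum_mul]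
    have : ∑ i ∈ F, B i j = ∑ i, B i j := by
      have := support_sum (B := B) j (fun _ => 1)
      simpa using this
    rw [this, hcolj]
    ring
  rw [hwp] at hJ
  rw [Real.log_div hrj.ne' hρ.ne'] at hJ
  have hlhs : ∑ i, B i j * z i * (Real.log (z j) - Real.log (z i))
      = (ρ * z j) * ∑ i ∈ F, w i * Real.log (p i) := by
    rw [Finset.mul_sum]
    rw [show ∑ i, B i j * z i * (Real.log (z j) - Real.log (z i))
        = ∑ i, B i j * (z i * (Real.log (z j) - Real.log (z i))) from
      Finset.sum_congr rfl fun i _ => by ring]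
    rw [← support_sum (B := B) j (fun i => z i * (Real.log (z j) - Real.log (z i)))]
    apply Finset.sum_congr rfl
    intro i hi
    rw [hw, hp, Real.log_div (hz j).ne' (hz i).ne']
    have h1' := (hz j).ne'
    have h3' := hρ.ne'
    field_simp
  rw [hlhs]
  calc (ρ * z j) * ∑ i ∈ F, w i * Real.log (p i)
      < (ρ * z j) * (Real.log (r j) - Real.log ρ) := by
        apply (mul_lt_mul_iff_right₀ hzj).mpr hJ
    _ = ρ * z j * (Real.log (r j) - Real.log ρ) := by ring

/-- row Jensen inequality, non-strict -/
lemma row_jensen (hB0 : ∀ i j, 0 ≤ B i j) (hρ : 0 < ρ) (hx : ∀ i, 0 < x i)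
    (hu : ∀ i, 0 < u i) (i : Fin n) (hBu : 0 < ∑ j, B i j * u j)
    (hrowi : ∑ j, B i j * x j = ρ * x i) :
    ∑ j, B i j * x j * ((Real.log (u j) - Real.log (x j)) - (Real.log (u i) - Real.log (x i)))
      ≤ ρ * x i * (Real.log (∑ j, B i j * u j) - Real.log (u i) - Real.log ρ) := by
  classical
  set F := Finset.univ.filter (fun j => B i j ≠ 0) with hF
  set w : Fin n → ℝ := fun j => B i j * x j / (ρ * x i) with hw
  set p : Fin n → ℝ := fun j => (x i * u j) / (x j * u i) with hp
  have hxi : 0 < ρ * x i := mul_pos hρ (hx i)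
  have hw0 : ∀ j ∈ F, 0 ≤ w j := fun j _ =>
    div_nonneg (mul_nonneg (hB0 i j) (hx j).le) hxi.le
  have h1 : ∑ j ∈ F, w j = 1 := by
    rw [hw]
    simp only [← Finset.sum_div]
    rw [hF, support_sum_row i x, hrowi, div_self hxi.ne']
  have hppos : ∀ j ∈ F, 0 < p j :=
    fun j _ => div_pos (mul_pos (hx i) (hu j)) (mul_pos (hx j) (hu i))
  have hJ := jensen_log hw0 h1 hppos
  have hwp : ∑ j ∈ F, w j * p j = (∑ j, B i j * u j) / (ρ * u i) := by
    have hpt : ∀ j ∈ F, w j * p j = B i j * u j * (1/(ρ * u i)) := by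
      intro j _
      rw [hw, hp]
      have h1' := (hx j).ne'
      have h2' := (hx i).ne'
      have h3' := hρ.ne'
      have h4' := (hu i).ne'
      field_simp
    rw [Finset.sum_congr rfl hpt, ← Finset.sum_mul]
    rw [hF, support_sum_row i u]
    field_simp
  rw [hwp] at hJ
  have hlog : Real.log ((∑ j, B i j * u j) / (ρ * u i))
      = Real.log (∑ j, B i j * u j) - Real.log ρ - Real.log (u i) := by
    rw [Real.log_div hBu.ne' (mul_pos hρ (hu i)).ne', Real.log_mul hρ.ne' (hu i).ne']
    ring
  rw [hlog] at hJ
  have hlhs : ∑ j, B i j * x j * ((Real.log (u j) - Real.log (x j))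
        - (Real.log (u i) - Real.log (x i)))
      = (ρ * x i) * ∑ j ∈ F, w j * Real.log (p j) := by
    rw [Finset.mul_sum]
    rw [show ∑ j, B i j * x j * ((Real.log (u j) - Real.log (x j))
          - (Real.log (u i) - Real.log (x i)))
        = ∑ j, B i j * (x j * ((Real.log (u j) - Real.log (x j))
          - (Real.log (u i) - Real.log (x i)))) from
      Finset.sum_congr rfl fun j _ => by ring]
    rw [← support_sum_row (B := B) i (fun j => x j * ((Real.log (u j) - Real.log (x j))
        - (Real.log (u i) - Real.log (x i))))]
    apply Finset.sum_congr rfl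
    intro j hj
    rw [hw, hp]
    rw [Real.log_div (mul_pos (hx i) (hu j)).ne' (mul_pos (hx j) (hu i)).ne',
      Real.log_mul (hx i).ne' (hu j).ne', Real.log_mul (hx j).ne' (hu i).ne']
    have h2' := (hx i).ne'
    have h3' := hρ.ne'
    field_simp
    ring
  rw [hlhs]
  calc (ρ * x i) * ∑ j ∈ F, w j * Real.log (p j)
      ≤ (ρ * x i) * (Real.log (∑ j, B i j * u j) - Real.log ρ - Real.log (u i)) := by
        apply mul_le_mul_of_nonneg_left hJ hxi.le
    _ = ρ * x i * (Real.log (∑ j, B i j * u j) - Real.log (u i) - Real.log ρ) := by ring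

/-- telescoping identity -/
lemma telescope (hrow : ∀ i, ∑ j, B i j * x j = ρ * x i)
    (hleft : ∀ j, ∑ i, B i j * z i = ρ * z j) (φ : Fin n → ℝ) :
    ∑ j, ∑ i, B i j * z i * x j * (φ j - φ i) = 0 := by
  have h1 : ∑ j, ∑ i, B i j * z i * x j * φ j = ∑ j, (x j * φ j) * (ρ * z j) := by
    apply Finset.sum_congr rfl
    intro j _
    rw [show (x j * φ j) * (ρ * z j) = (x j * φ j) * ∑ i, B i j * z i by rw [hleft j]]
    rw [Finset.mul_sum]
    exact Finset.sum_congr rfl fun i _ => by ring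
  have h2 : ∑ j, ∑ i, B i j * z i * x j * φ i = ∑ i, (z i * φ i) * (ρ * x i) := by
    rw [Finset.sum_comm]
    apply Finset.sum_congr rfl
    intro i _
    rw [show (z i * φ i) * (ρ * x i) = (z i * φ i) * ∑ j, B i j * x j by rw [hrow i]]
    rw [Finset.mul_sum]
    exact Finset.sum_congr rfl fun j _ => by ring
  have h3 : ∑ j, ∑ i, B i j * z i * x j * (φ j - φ i)
      = (∑ j, ∑ i, B i j * z i * x j * φ j) - (∑ j, ∑ i, B i j * z i * x j * φ i) := by
    rw [← Finset.sum_sub_distrib]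
    apply Finset.sum_congr rfl
    intro j _
    rw [← Finset.sum_sub_distrib]
    apply Finset.sum_congr rfl
    intro i _
    ring
  rw [h3, h1, h2]
  rw [show ∑ j, (x j * φ j) * (ρ * z j) = ∑ j, (z j * φ j) * (ρ * x j) from
    Finset.sum_congr rfl fun j _ => by ring]
  ring

end ColRow

/-- connectivity: an edge-constant function on an irreducible matrix is constant -/
lemma const_of_irreducible (hn : 1 ≤ n) {B : Matrix (Fin n) (Fin n) ℝ}
    (hirr : MatIrreducible B) {f : Fin n → ℝ}
    (hf : ∀ i j, B i j ≠ 0 → f i = f j) : ∀ i j, f i = f j := by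
  have hnonempty : Nonempty (Fin n) := ⟨⟨0, hn⟩⟩
  suffices h : ∀ j i, f i = f j by
    intro i j; rw [h j i]
  intro j
  set S : Finset (Fin n) := Finset.univ.filter (fun i => f i = f j) with hS
  have hjS : j ∈ S := by simp [hS]
  have huniv : S = Finset.univ := by
    by_contra hne
    obtain ⟨i, hiS, l, hlS, hBil⟩ := hirr S ⟨j, hjS⟩ hne
    apply hiS
    rw [hS, Finset.mem_filter]
    refine ⟨Finset.mem_univ i, ?_⟩
    rw [hf i l hBil]
    rw [hS, Finset.mem_filter] at hlS
    exact hlS.2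
  intro i
  have : i ∈ S := huniv ▸ Finset.mem_univ i
  rw [hS, Finset.mem_filter] at this
  exact this.2

/-- the strict geometric mean inequality: `∑ π log r > log ρ` -/
theorem gm_strict (hn : 2 ≤ n) {B : Matrix (Fin n) (Fin n) ℝ} {ρ : ℝ} {r x z : Fin n → ℝ}
    (hB0 : ∀ i j, 0 ≤ B i j) (hBdiag : ∀ i, 0 < B i i) (hirr : MatIrreducible B)
    (hρ : 0 < ρ) (hx : ∀ i, 0 < x i) (hz : ∀ i, 0 < z i) (hr : ∀ i, 0 < r i)
    (hcol : ∀ j, ∑ i, B i j = r j)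
    (hrow : ∀ i, ∑ j, B i j * x j = ρ * x i)
    (hleft : ∀ j, ∑ i, B i j * z i = ρ * z j)
    (hrne : ¬ ∀ i j, r i = r j) :
    Real.log ρ * (∑ j, z j * x j) < ∑ j, z j * x j * Real.log (r j) := by
  -- z is not edge-constant
  have hznc : ∃ i j, B i j ≠ 0 ∧ z i ≠ z j := by
    by_contra hcon
    push_neg at hcon
    have hzconst : ∀ i j, z i = z j :=
      const_of_irreducible (by omega) hirr (fun i j h => hcon i j h)
    apply hrne
    intro i j
    have hri : r i = ρ := by
      have h1 := hleft i
      have h2 : ∑ l, B l i * z l = (∑ l, B l i) * z i := by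
        rw [Finset.sum_mul]
        exact Finset.sum_congr rfl fun l _ => by rw [hzconst l i]
      rw [h2, hcol i] at h1
      exact mul_right_cancel₀ (hz i).ne' h1
    have hrj : r j = ρ := by
      have h1 := hleft j
      have h2 : ∑ l, B l j * z l = (∑ l, B l j) * z j := by
        rw [Finset.sum_mul]
        exact Finset.sum_congr rfl fun l _ => by rw [hzconst l j]
      rw [h2, hcol j] at h1
      exact mul_right_cancel₀ (hz j).ne' h1
    rw [hri, hrj]
  obtain ⟨i₀, j₀, hBij, hzij⟩ := hznc
  -- per-column comparisons, weighted by x j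
  have hle : ∀ j ∈ Finset.univ,
      x j * (∑ i, B i j * z i * (Real.log (z j) - Real.log (z i)))
        ≤ x j * (ρ * z j * (Real.log (r j) - Real.log ρ)) := by
    intro j _
    apply mul_le_mul_of_nonneg_left _ (hx j).le
    exact col_jensen hB0 hρ hz j (hr j) (hcol j) (hleft j)
  have hlt : x j₀ * (∑ i, B i j₀ * z i * (Real.log (z j₀) - Real.log (z i)))
      < x j₀ * (ρ * z j₀ * (Real.log (r j₀) - Real.log ρ)) := by
    apply (mul_lt_mul_iff_right₀ (hx j₀)).mpr
    exact col_jensen_strict hB0 hρ hz j₀ (hr j₀) (hcol j₀) (hleft j₀)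
      (hBdiag j₀) hBij hzij
  have hsum : ∑ j, x j * (∑ i, B i j * z i * (Real.log (z j) - Real.log (z i)))
      < ∑ j, x j * (ρ * z j * (Real.log (r j) - Real.log ρ)) :=
    Finset.sum_lt_sum hle ⟨j₀, Finset.mem_univ j₀, hlt⟩
  -- LHS equals 0 by the telescoping identity
  have hLHS : ∑ j, x j * (∑ i, B i j * z i * (Real.log (z j) - Real.log (z i))) = 0 := by
    rw [← telescope hrow hleft (fun i => Real.log (z i))]
    apply Finset.sum_congr rfl
    intro j _
    rw [Finset.mul_sum]
    exact Finset.sum_congr rfl fun i _ => by ring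
  rw [hLHS] at hsum
  -- RHS rearrangement
  have hRHS : ∑ j, x j * (ρ * z j * (Real.log (r j) - Real.log ρ))
      = ρ * ((∑ j, z j * x j * Real.log (r j)) - Real.log ρ * (∑ j, z j * x j)) := by
    rw [mul_sub]
    simp only [Finset.mul_sum]
    rw [← Finset.sum_sub_distrib]
    apply Finset.sum_congr rfl
    intro j _
    ring
  rw [hRHS] at hsum
  by_contra hcon
  push_neg at hcon
  have : ρ * ((∑ j, z j * x j * Real.log (r j)) - Real.log ρ * (∑ j, z j * x j)) ≤ 0 := by
    apply mul_nonpos_of_nonneg_of_nonpos hρ.le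
    linarith
  linarith

/-- the Donsker–Varadhan style lower bound -/
theorem dv_row (hn : 2 ≤ n) {B : Matrix (Fin n) (Fin n) ℝ} {ρ : ℝ} {x z u : Fin n → ℝ}
    (hB0 : ∀ i j, 0 ≤ B i j)
    (hρ : 0 < ρ) (hx : ∀ i, 0 < x i) (hz : ∀ i, 0 < z i) (hu : ∀ i, 0 < u i)
    (hBu : ∀ i, 0 < ∑ j, B i j * u j)
    (hrow : ∀ i, ∑ j, B i j * x j = ρ * x i)
    (hleft : ∀ j, ∑ i, B i j * z i = ρ * z j) :
    Real.log ρ * (∑ i, z i * x i)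
      ≤ ∑ i, z i * x i * (Real.log (∑ j, B i j * u j) - Real.log (u i)) := by
  have hle : ∀ i ∈ Finset.univ,
      z i * (∑ j, B i j * x j * ((Real.log (u j) - Real.log (x j))
          - (Real.log (u i) - Real.log (x i))))
        ≤ z i * (ρ * x i * (Real.log (∑ j, B i j * u j) - Real.log (u i) - Real.log ρ)) := by
    intro i _
    apply mul_le_mul_of_nonneg_left _ (hz i).le
    exact row_jensen hB0 hρ hx hu i (hBu i) (hrow i)
  have hsum := Finset.sum_le_sum hle
  have hLHS : ∑ i, z i * (∑ j, B i j * x j * ((Real.log (u j) - Real.log (x j))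
      - (Real.log (u i) - Real.log (x i)))) = 0 := by
    rw [← telescope hrow hleft (fun k => Real.log (u k) - Real.log (x k))]
    rw [Finset.sum_comm]
    apply Finset.sum_congr rfl
    intro i _
    rw [Finset.mul_sum]
    exact Finset.sum_congr rfl fun j _ => by ring
  rw [hLHS] at hsum
  have hRHS : ∑ i, z i * (ρ * x i * (Real.log (∑ j, B i j * u j) - Real.log (u i) - Real.log ρ))
      = ρ * ((∑ i, z i * x i * (Real.log (∑ j, B i j * u j) - Real.log (u i)))
          - Real.log ρ * (∑ i, z i * x i)) := by
    rw [mul_sub]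
    simp only [Finset.mul_sum]
    rw [← Finset.sum_sub_distrib]
    apply Finset.sum_congr rfl
    intro i _
    ring
  rw [hRHS] at hsum
  by_contra hcon
  push_neg at hcon
  have : ρ * ((∑ i, z i * x i * (Real.log (∑ j, B i j * u j) - Real.log (u i)))
      - Real.log ρ * (∑ i, z i * x i)) < 0 := by
    apply mul_neg_of_pos_of_neg hρ
    linarith
  linarith

lemma rad_transpose (A : Matrix (Fin n) (Fin n) ℝ) :
    rad (cplx Aᵀ) = rad (cplx A) := by
  have h : cplx Aᵀ = (cplx A)ᵀ := by
    ext i j; simp [cplx, Matrix.transpose_apply, Matrix.map_apply]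
  rw [rad, h, spec_transpose]
  rfl

lemma irr_transpose {B : Matrix (Fin n) (Fin n) ℝ} (h : MatIrreducible B) :
    MatIrreducible Bᵀ := by
  intro S hSne hSuniv
  have hc_ne : Sᶜ.Nonempty := by
    rw [← Finset.card_pos, Finset.card_compl]
    have h1 : S.card < Fintype.card (Fin n) := by
      apply lt_of_le_of_ne (Finset.card_le_univ S)
      intro hcon
      exact hSuniv (Finset.eq_univ_of_card S (by simpa using hcon))
    omega
  have hc_univ : Sᶜ ≠ Finset.univ := by
    intro hcon
    obtain ⟨a, ha⟩ := hSne
    have : a ∈ Sᶜ := hcon ▸ Finset.mem_univ a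
    rw [Finset.mem_compl] at this
    exact this ha
  obtain ⟨i, hiS, j, hjS, hBij⟩ := h Sᶜ hc_ne hc_univ
  rw [Finset.mem_compl, not_not] at hiS
  rw [Finset.mem_compl] at hjS
  exact ⟨j, hjS, i, hiS, by rwa [Matrix.transpose_apply]⟩

/-- main comparison lemma: going from `B` to `(1-s) diag r + s B` strictly increases
the spectral radius -/
theorem comparison (hn : 2 ≤ n) {B C : Matrix (Fin n) (Fin n) ℝ} {s : ℝ} {r : Fin n → ℝ}
    (hB0 : ∀ i j, 0 ≤ B i j) (hBdiag : ∀ i, 0 < B i i) (hirr : MatIrreducible B)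
    (hr : ∀ i, 0 < r i) (hcol : ∀ j, ∑ i, B i j = r j)
    (hrne : ¬ ∀ i j, r i = r j)
    (hs0 : 0 < s) (hs1 : s < 1)
    (hC : ∀ i j, C i j = (1 - s) * (if i = j then r i else 0) + s * B i j)
    (hCdiag : ∀ i, 0 < C i i) (hCirr : MatIrreducible C) :
    rad (cplx B) < rad (cplx C) := by
  have hC0 : ∀ i j, 0 ≤ C i j := by
    intro i j
    rw [hC]
    apply add_nonneg
    · by_cases h : i = j
      · subst h
        simpa using mul_nonneg (by linarith : (0:ℝ) ≤ 1 - s) (hr i).le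
      · simp [h]
    · exact mul_nonneg hs0.le (hB0 i j)
  -- Perron data for B
  obtain ⟨hρB, x, hx, hxe⟩ := perron_frobenius hn hB0 hBdiag hirr
  obtain ⟨hρBt, z, hz, hze⟩ := perron_frobenius hn
    (B := Bᵀ) (fun i j => hB0 j i) (fun i => hBdiag i) (irr_transpose hirr)
  rw [rad_transpose] at hρBt hze
  -- Perron data for C
  obtain ⟨hρC, u, hu, hue⟩ := perron_frobenius hn hC0 hCdiag hCirr
  set ρB := rad (cplx B) with hρBdef
  set ρC := rad (cplx C) with hρCdef
  have hrow : ∀ i, ∑ j, B i j * x j = ρB * x i := by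
    intro i
    have := congrFun hxe i
    simpa [Matrix.mulVec, dotProduct, Pi.smul_apply, smul_eq_mul] using this
  have hleft : ∀ j, ∑ i, B i j * z i = ρB * z j := by
    intro j
    have h := congrFun hze j
    simpa [Matrix.mulVec, dotProduct, Matrix.transpose_apply, Pi.smul_apply,
      smul_eq_mul] using h
  have hCrow : ∀ i, ∑ j, C i j * u j = ρC * u i := by
    intro i
    have := congrFun hue i
    simpa [Matrix.mulVec, dotProduct, Pi.smul_apply, smul_eq_mul] using this
  have hBu : ∀ i, 0 < ∑ j, B i j * u j := by
    intro i
    apply Finset.sum_pos' (fun j _ => mul_nonneg (hB0 i j) (hu j).le)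
    exact ⟨i, Finset.mem_univ i, mul_pos (hBdiag i) (hu i)⟩
  -- pointwise identity: ρC = (1-s) * r i + s * ((B u)_i / u i)
  have hkeyid : ∀ i, ρC = (1 - s) * r i + s * ((∑ j, B i j * u j) / u i) := by
    intro i
    have h1 : ∑ j, C i j * u j = (1 - s) * (r i * u i) + s * ∑ j, B i j * u j := by
      rw [show ∑ j, C i j * u j
          = ∑ j, ((1 - s) * (if i = j then r i else 0) * u j + s * (B i j * u j)) from
        Finset.sum_congr rfl fun j _ => by rw [hC i j]; ring]
      rw [Finset.sum_add_distrib]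
      congr 1
      · rw [Finset.sum_eq_single i]
        · rw [if_pos rfl]; ring
        · intro b _ hb
          rw [if_neg (Ne.symm hb)]
          ring
        · intro hcon
          exact absurd (Finset.mem_univ i) hcon
      · rw [Finset.mul_sum]
    have h2 := hCrow i
    rw [h1] at h2
    have hui := (hu i).ne'
    field_simp
    nlinarith [h2]
  -- logarithmic concavity estimate pointwise
  have hlog : ∀ i, (1 - s) * Real.log (r i)
      + s * (Real.log (∑ j, B i j * u j) - Real.log (u i)) ≤ Real.log ρC := by
    intro i
    have hti : 0 < (∑ j, B i j * u j) / u i := div_pos (hBu i) (hu i)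
    have hconc := (strictConcaveOn_log_Ioi.concaveOn).2
      (Set.mem_Ioi.mpr (hr i)) (Set.mem_Ioi.mpr hti)
      (by linarith : (0:ℝ) ≤ 1 - s) hs0.le (by ring)
    simp only [smul_eq_mul] at hconc
    rw [← hkeyid i] at hconc
    calc (1 - s) * Real.log (r i) + s * (Real.log (∑ j, B i j * u j) - Real.log (u i))
        = (1 - s) * Real.log (r i) + s * Real.log ((∑ j, B i j * u j) / u i) := by
          rw [Real.log_div (hBu i).ne' (hu i).ne']
      _ ≤ Real.log ρC := hconc
  -- sum against π = z * x
  set K := ∑ i, z i * x i with hK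
  have hKpos : 0 < K := Finset.sum_pos (fun i _ => mul_pos (hz i) (hx i))
    ⟨⟨0, by omega⟩, Finset.mem_univ _⟩
  have hsummed : (1 - s) * (∑ i, z i * x i * Real.log (r i))
      + s * (∑ i, z i * x i * (Real.log (∑ j, B i j * u j) - Real.log (u i)))
      ≤ Real.log ρC * K := by
    have h1 : ∀ i ∈ Finset.univ, z i * x i * ((1 - s) * Real.log (r i)
        + s * (Real.log (∑ j, B i j * u j) - Real.log (u i)))
          ≤ z i * x i * Real.log ρC := fun i _ =>
      mul_le_mul_of_nonneg_left (hlog i) (mul_pos (hz i) (hx i)).le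
    have h2 := Finset.sum_le_sum h1
    calc (1 - s) * (∑ i, z i * x i * Real.log (r i))
        + s * (∑ i, z i * x i * (Real.log (∑ j, B i j * u j) - Real.log (u i)))
        = ∑ i, z i * x i * ((1 - s) * Real.log (r i)
            + s * (Real.log (∑ j, B i j * u j) - Real.log (u i))) := by
          simp only [Finset.mul_sum]
          rw [← Finset.sum_add_distrib]
          exact Finset.sum_congr rfl fun i _ => by ring
      _ ≤ ∑ i, z i * x i * Real.log ρC := h2
      _ = Real.log ρC * K := by
          rw [hK, Finset.mul_sum]
          exact Finset.sum_congr rfl fun i _ => by ring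
  have hgm := gm_strict hn hB0 hBdiag hirr hρB hx hz hr hcol hrow hleft hrne
  have hdv := dv_row hn hB0 hρB hx hz hu hBu hrow hleft
  -- combine
  have hfinal : Real.log ρB * K < Real.log ρC * K := by
    calc Real.log ρB * K
        = (1 - s) * (Real.log ρB * K) + s * (Real.log ρB * K) := by ring
      _ < (1 - s) * (∑ i, z i * x i * Real.log (r i))
          + s * (∑ i, z i * x i * (Real.log (∑ j, B i j * u j) - Real.log (u i))) := by
          apply add_lt_add_of_lt_of_le
          · apply (mul_lt_mul_iff_right₀ (by linarith)).mpr
            exact hgm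
          · apply mul_le_mul_of_nonneg_left hdv hs0.le
      _ ≤ Real.log ρC * K := hsummed
  have hloglt : Real.log ρB < Real.log ρC := by
    have := (mul_lt_mul_iff_left₀ hKpos).mp hfinal
    exact this
  exact (Real.log_lt_log_iff hρB hρC).mp hloglt

end KarlinAux

/-- Karlin's Theorem: for an irreducible column-stochastic matrix `P` and a positive
diagonal matrix `R = diagonal r` whose entries are not all equal, the spectral radius of
`((1-μ)I + μP)R` is strictly decreasing for `μ ∈ (0,1)`. -/
theorem stmt0 {n : ℕ} (hn : 2 ≤ n) (P : Matrix (Fin n) (Fin n) ℝ)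
    (hP_nonneg : ∀ i j, 0 ≤ P i j)
    (hP_col : ∀ j, ∑ i, P i j = 1)
    (hP_irr : MatIrreducible P)
    (r : Fin n → ℝ) (hr : ∀ i, 0 < r i)
    (hr_ne : ¬ ∀ i j, r i = r j) :
    StrictAntiOn (fun μ : ℝ =>
      specRad (((1 - μ) • (1 : Matrix (Fin n) (Fin n) ℝ) + μ • P) * Matrix.diagonal r))
      (Set.Ioo 0 1) := by
  have hentry : ∀ (t : ℝ) (i j : Fin n),
      (((1 - t) • (1 : Matrix (Fin n) (Fin n) ℝ) + t • P) * Matrix.diagonal r) i j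
        = ((1 - t) * (if i = j then 1 else 0) + t * P i j) * r j := by
    intro t i j
    rw [Matrix.mul_diagonal]
    simp only [Matrix.add_apply, Matrix.smul_apply, Matrix.one_apply, smul_eq_mul]
  -- properties of the family
  have hprops : ∀ t : ℝ, 0 < t → t < 1 →
      (∀ i j, 0 ≤ (((1 - t) • (1 : Matrix (Fin n) (Fin n) ℝ) + t • P) * Matrix.diagonal r) i j)
      ∧ (∀ i, 0 < (((1 - t) • (1 : Matrix (Fin n) (Fin n) ℝ) + t • P) * Matrix.diagonal r) i i)
      ∧ MatIrreducible (((1 - t) • (1 : Matrix (Fin n) (Fin n) ℝ) + t • P) * Matrix.diagonal r)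
      ∧ (∀ j, ∑ i, (((1 - t) • (1 : Matrix (Fin n) (Fin n) ℝ) + t • P) * Matrix.diagonal r) i j
          = r j) := by
    intro t ht0 ht1
    refine ⟨?_, ?_, ?_, ?_⟩
    · intro i j
      rw [hentry]
      apply mul_nonneg _ (hr j).le
      apply add_nonneg
      · by_cases h : i = j <;> simp [h]
        linarith
      · exact mul_nonneg ht0.le (hP_nonneg i j)
    · intro i
      rw [hentry]
      apply mul_pos _ (hr i)
      rw [if_pos rfl]
      have := hP_nonneg i i
      nlinarith
    · intro S hSne hSuniv
      obtain ⟨i, hiS, j, hjS, hPij⟩ := hP_irr S hSne hSuniv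
      refine ⟨i, hiS, j, hjS, ?_⟩
      rw [hentry]
      have hij : i ≠ j := by
        intro hcon
        subst hcon
        exact hiS hjS
      rw [if_neg hij]
      have hP : 0 < P i j := lt_of_le_of_ne (hP_nonneg i j) (Ne.symm hPij)
      have : 0 < ((1 - t) * 0 + t * P i j) * r j := by
        rw [mul_zero, zero_add]
        exact mul_pos (mul_pos ht0 hP) (hr j)
      exact this.ne'
    · intro j
      have : ∑ i, (((1 - t) • (1 : Matrix (Fin n) (Fin n) ℝ) + t • P) * Matrix.diagonal r) i j
          = (∑ i, ((1 - t) * (if i = j then 1 else 0) + t * P i j)) * r j := by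
        rw [Finset.sum_mul]
        exact Finset.sum_congr rfl fun i _ => hentry t i j
      rw [this]
      rw [Finset.sum_add_distrib]
      have h1 : ∑ i, (1 - t) * (if i = j then (1:ℝ) else 0) = 1 - t := by
        rw [Finset.sum_eq_single j]
        · rw [if_pos rfl, mul_one]
        · intro b _ hb
          rw [if_neg hb, mul_zero]
        · intro hcon
          exact absurd (Finset.mem_univ j) hcon
      have h2 : ∑ i, t * P i j = t := by
        rw [← Finset.mul_sum, hP_col j, mul_one]
      rw [h1, h2]
      ring
  intro a ha b hb hab
  obtain ⟨ha0, ha1⟩ := ha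
  obtain ⟨hb0, hb1⟩ := hb
  obtain ⟨hB0, hBdiag, hBirr, hBcol⟩ := hprops b hb0 hb1
  obtain ⟨hC0, hCdiag, hCirr, hCcol⟩ := hprops a ha0 ha1
  have hs0 : 0 < a / b := div_pos ha0 hb0
  have hs1 : a / b < 1 := (div_lt_one hb0).mpr hab
  have hCeq : ∀ i j,
      (((1 - a) • (1 : Matrix (Fin n) (Fin n) ℝ) + a • P) * Matrix.diagonal r) i j
      = (1 - a / b) * (if i = j then r i else 0)
        + (a / b) * ((((1 - b) • (1 : Matrix (Fin n) (Fin n) ℝ) + b • P)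
            * Matrix.diagonal r) i j) := by
    intro i j
    rw [hentry, hentry]
    by_cases h : i = j
    · subst h
      rw [if_pos rfl, if_pos rfl]
      field_simp
      ring
    · rw [if_neg h, if_neg h]
      field_simp
      ring
  exact KarlinAux.comparison hn hB0 hBdiag hBirr hr hBcol hr_ne hs0 hs1 hCeq hCdiag hCirr
end

section
/- Let A be an irreducible quasi-positive n×n real matrix with s(A) ≤ 0, and let Q = diag(q_1, …, q_n) be a real diagonal matrix. Then the function μ ↦ s(μA + Q) is either constant on (0, ∞) or strictly decreasing on (0, ∞). -/
open Matrix Filter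
open scoped Topology ENNReal

namespace PF

variable {n : ℕ}

attribute [local instance] Matrix.linftyOpNormedAddCommGroup Matrix.linftyOpNormedRing
  Matrix.linftyOpNormedAlgebra

noncomputable local instance : CompleteSpace (Matrix (Fin n) (Fin n) ℂ) :=
  inferInstance

lemma mem_spectrum_iff {M : Matrix (Fin n) (Fin n) ℂ} {z : ℂ} :
    z ∈ spectrum ℂ M ↔ ∃ v ≠ 0, M.mulVec v = z • v := by
  rw [spectrum.mem_iff, Matrix.isUnit_iff_isUnit_det, isUnit_iff_ne_zero, not_not,
    ← Matrix.exists_mulVec_eq_zero_iff]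
  constructor
  · rintro ⟨v, hv, h⟩
    refine ⟨v, hv, ?_⟩
    have := h
    rw [Matrix.sub_mulVec] at this
    have h1 : (algebraMap ℂ (Matrix (Fin n) (Fin n) ℂ) z).mulVec v = z • v := by
      rw [Algebra.algebraMap_eq_smul_one, Matrix.smul_mulVec, Matrix.one_mulVec]
    rw [h1, sub_eq_zero] at this
    exact this.symm
  · rintro ⟨v, hv, h⟩
    refine ⟨v, hv, ?_⟩
    rw [Matrix.sub_mulVec, Algebra.algebraMap_eq_smul_one, Matrix.smul_mulVec,
      Matrix.one_mulVec, h, sub_self]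

lemma nontrivial_matrix (hn : 0 < n) : Nontrivial (Matrix (Fin n) (Fin n) ℂ) := by
  refine ⟨1, 0, fun h => ?_⟩
  have := congrFun (congrFun h ⟨0, hn⟩) ⟨0, hn⟩
  simp [Matrix.one_apply_eq] at this

lemma spectrum_nonempty (hn : 0 < n) (M : Matrix (Fin n) (Fin n) ℂ) :
    (spectrum ℂ M).Nonempty := by
  haveI := nontrivial_matrix hn
  exact spectrum.nonempty M

lemma spectrum_isCompact (M : Matrix (Fin n) (Fin n) ℂ) :
    IsCompact (spectrum ℂ M) :=
  spectrum.isCompact M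

/-- existence of a maximizer of a continuous function on the spectrum -/
lemma exists_max_on_spectrum (hn : 0 < n) (M : Matrix (Fin n) (Fin n) ℂ)
    (f : ℂ → ℝ) (hf : Continuous f) :
    ∃ z ∈ spectrum ℂ M, (∀ w ∈ spectrum ℂ M, f w ≤ f z) ∧
      sSup (f '' spectrum ℂ M) = f z := by
  obtain ⟨z, hz, hmax⟩ := (spectrum_isCompact M).exists_isMaxOn (spectrum_nonempty hn M)
    (hf.continuousOn)
  refine ⟨z, hz, fun w hw => hmax hw, ?_⟩
  exact IsGreatest.csSup_eq ⟨Set.mem_image_of_mem f hz, by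
    rintro - ⟨w, hw, rfl⟩; exact hmax hw⟩

lemma bddAbove_image_spectrum (M : Matrix (Fin n) (Fin n) ℂ) (f : ℂ → ℝ) (hf : Continuous f) :
    BddAbove (f '' spectrum ℂ M) :=
  (((spectrum_isCompact M).image hf).bddAbove)

lemma spectrum_transpose (M : Matrix (Fin n) (Fin n) ℂ) : spectrum ℂ Mᵀ = spectrum ℂ M := by
  ext z
  rw [spectrum.mem_iff, spectrum.mem_iff, Matrix.isUnit_iff_isUnit_det,
    Matrix.isUnit_iff_isUnit_det]
  have h : algebraMap ℂ (Matrix (Fin n) (Fin n) ℂ) z - Mᵀ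
      = (algebraMap ℂ (Matrix (Fin n) (Fin n) ℂ) z - M)ᵀ := by
    rw [Matrix.transpose_sub]
    congr 1
    simp [Algebra.algebraMap_eq_smul_one]
  rw [h, Matrix.det_transpose]

lemma affine_mulVec (a b : ℂ) (M : Matrix (Fin n) (Fin n) ℂ) (v : Fin n → ℂ) :
    (a • M + b • 1).mulVec v = a • M.mulVec v + b • v := by
  rw [Matrix.add_mulVec, Matrix.smul_mulVec, Matrix.smul_mulVec, Matrix.one_mulVec]

lemma spectrum_affine (a b : ℂ) (ha : a ≠ 0) (M : Matrix (Fin n) (Fin n) ℂ) :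
    spectrum ℂ (a • M + b • 1) = (fun z => a * z + b) '' spectrum ℂ M := by
  ext z
  rw [mem_spectrum_iff]
  constructor
  · rintro ⟨v, hv, h⟩
    rw [affine_mulVec] at h
    refine ⟨(z - b) / a, ?_, by field_simp; ring⟩
    rw [mem_spectrum_iff]
    refine ⟨v, hv, ?_⟩
    have h2 : a • M.mulVec v = (z - b) • v := by
      rw [sub_smul]; exact eq_sub_of_add_eq h
    have h3 : M.mulVec v = a⁻¹ • (a • M.mulVec v) := by
      rw [smul_smul, inv_mul_cancel₀ ha, one_smul]
    rw [h3, h2, smul_smul, ← div_eq_inv_mul]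
  · rintro ⟨w, hw, rfl⟩
    rw [mem_spectrum_iff] at hw
    obtain ⟨v, hv, h⟩ := hw
    refine ⟨v, hv, ?_⟩
    rw [affine_mulVec, h, smul_smul, add_smul]

lemma map_affine (a b : ℝ) (A : Matrix (Fin n) (Fin n) ℝ) :
    (a • A + b • 1).map Complex.ofReal
      = (a : ℂ) • A.map Complex.ofReal + (b : ℂ) • 1 := by
  ext i j
  by_cases h : i = j <;>
    simp [Matrix.map_apply, Matrix.add_apply, Matrix.smul_apply, Matrix.one_apply, h]

lemma map_transpose (A : Matrix (Fin n) (Fin n) ℝ) :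
    Aᵀ.map Complex.ofReal = (A.map Complex.ofReal)ᵀ := rfl

lemma specBound_transpose (A : Matrix (Fin n) (Fin n) ℝ) : specBound Aᵀ = specBound A := by
  unfold specBound
  rw [map_transpose, spectrum_transpose]

lemma real_mulVec_map (M : Matrix (Fin n) (Fin n) ℝ) (u : Fin n → ℝ) :
    (M.map Complex.ofReal).mulVec (fun i => (u i : ℂ))
      = fun i => ((M.mulVec u i : ℝ) : ℂ) := by
  funext i
  simp [Matrix.mulVec, dotProduct, Matrix.map_apply]


section SpecLemmas
variable (A : Matrix (Fin n) (Fin n) ℝ)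

lemma re_le_specBound {z : ℂ} (hz : z ∈ spectrum ℂ (A.map Complex.ofReal)) :
    z.re ≤ specBound A :=
  le_csSup (bddAbove_image_spectrum _ _ Complex.continuous_re) (Set.mem_image_of_mem _ hz)

lemma abs_le_specRad {z : ℂ} (hz : z ∈ spectrum ℂ (A.map Complex.ofReal)) :
    ‖z‖ ≤ specRad A :=
  le_csSup (bddAbove_image_spectrum _ _ continuous_norm) (Set.mem_image_of_mem _ hz)

lemma exists_specRad_eq (hn : 0 < n) :
    ∃ z ∈ spectrum ℂ (A.map Complex.ofReal), ‖z‖ = specRad A := by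
  obtain ⟨z, hz, -, h⟩ := exists_max_on_spectrum hn (A.map Complex.ofReal)
    (fun z => ‖z‖) continuous_norm
  exact ⟨z, hz, h.symm⟩

lemma specRad_nonneg (hn : 0 < n) : 0 ≤ specRad A := by
  obtain ⟨z, hz, h⟩ := exists_specRad_eq A hn
  rw [← h]; positivity

lemma specBound_affine (hn : 0 < n) {a : ℝ} (ha : 0 < a) (b : ℝ) :
    specBound (a • A + b • 1) = a * specBound A + b := by
  obtain ⟨z, hz, hmax, hsup⟩ := exists_max_on_spectrum hn (A.map Complex.ofReal)
    Complex.re Complex.continuous_re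
  have hspec : spectrum ℂ ((a • A + b • 1).map Complex.ofReal)
      = (fun w => (a:ℂ) * w + (b:ℂ)) '' spectrum ℂ (A.map Complex.ofReal) := by
    rw [map_affine, spectrum_affine]
    exact_mod_cast ha.ne'
  have : specBound A = z.re := hsup
  rw [specBound, hspec, this]
  apply IsGreatest.csSup_eq
  constructor
  · refine ⟨(a:ℂ) * z + (b:ℂ), Set.mem_image_of_mem _ hz, ?_⟩
    simp [Complex.add_re, Complex.mul_re]
  · rintro - ⟨-, ⟨w, hw, rfl⟩, rfl⟩
    have : ((a:ℂ) * w + (b:ℂ)).re = a * w.re + b := by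
      simp [Complex.add_re, Complex.mul_re]
    rw [this]
    have := hmax w hw
    nlinarith
end SpecLemmas

section Combinatorial
variable {B : Matrix (Fin n) (Fin n) ℝ}

lemma irreducible_transpose (h : MatIrreducible B) : MatIrreducible Bᵀ := by
  intro S hS hSu
  have h1 : Sᶜ.Nonempty := by
    rw [← Finset.card_pos, Finset.card_compl, tsub_pos_iff_lt]
    exact lt_of_le_of_ne (Finset.card_le_univ S) (fun hc => hSu (Finset.eq_univ_of_card S hc))
  have h2 : Sᶜ ≠ Finset.univ := by
    intro hc
    obtain ⟨j, hj⟩ := hS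
    have : j ∈ Sᶜ := hc ▸ Finset.mem_univ j
    exact (Finset.mem_compl.mp this) hj
  obtain ⟨i, hi, j, hj, hij⟩ := h Sᶜ h1 h2
  rw [Finset.mem_compl, not_not] at hi
  exact ⟨j, Finset.mem_compl.mp hj, i, hi, hij⟩

lemma mulVec_nonneg (hB : ∀ i j, 0 ≤ B i j) {x : Fin n → ℝ} (hx : ∀ i, 0 ≤ x i) :
    ∀ i, 0 ≤ B.mulVec x i := by
  intro i
  simp only [Matrix.mulVec, dotProduct]
  apply Finset.sum_nonneg
  intro j _
  exact mul_nonneg (hB i j) (hx j)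

lemma mulVec_mono (hB : ∀ i j, 0 ≤ B i j) {x y : Fin n → ℝ} (hxy : ∀ i, x i ≤ y i) :
    ∀ i, B.mulVec x i ≤ B.mulVec y i := by
  intro i
  simp only [Matrix.mulVec, dotProduct]
  apply Finset.sum_le_sum
  intro j _
  exact mul_le_mul_of_nonneg_left (hxy j) (hB i j)

/-- support of a nonneg vector -/
noncomputable def supp (x : Fin n → ℝ) : Finset (Fin n) := Finset.univ.filter (fun i => 0 < x i)

lemma mem_supp {x : Fin n → ℝ} {i : Fin n} : i ∈ supp x ↔ 0 < x i := by
  simp [supp]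

lemma supp_step (hB : ∀ i j, 0 ≤ B i j) (hirr : MatIrreducible B)
    {y : Fin n → ℝ} (hy : ∀ i, 0 ≤ y i) :
    supp y ⊆ supp ((1 + B).mulVec y) ∧
      (supp y ≠ Finset.univ → supp y ⊂ supp ((1 + B).mulVec y) ∨ ¬ (supp y).Nonempty) := by
  have hval : ∀ i, (1 + B).mulVec y i = y i + B.mulVec y i := by
    intro i
    rw [Matrix.add_mulVec, Matrix.one_mulVec]
    rfl
  have hsub : supp y ⊆ supp ((1 + B).mulVec y) := by
    intro i hi
    rw [mem_supp] at hi ⊢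
    rw [hval]
    have := mulVec_nonneg hB hy i
    linarith
  refine ⟨hsub, fun hne => ?_⟩
  by_cases hS : (supp y).Nonempty
  · left
    obtain ⟨i, hi, j, hj, hij⟩ := hirr (supp y) hS hne
    refine Finset.ssubset_iff_of_subset hsub |>.mpr ⟨i, ?_, hi⟩
    rw [mem_supp, hval]
    have h1 : 0 < B.mulVec y i := by
      have hterm : 0 < B i j * y j :=
        mul_pos (lt_of_le_of_ne (hB i j) (Ne.symm hij)) (mem_supp.mp hj)
      have : ∀ k ∈ Finset.univ, 0 ≤ B i k * y k :=
        fun k _ => mul_nonneg (hB i k) (hy k)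
      calc 0 < B i j * y j := hterm
        _ ≤ ∑ k, B i k * y k := Finset.single_le_sum this (Finset.mem_univ j)
        _ = B.mulVec y i := rfl
    have := hy i
    linarith
  · right; exact hS

lemma supp_pow_card (hB : ∀ i j, 0 ≤ B i j) (hirr : MatIrreducible B)
    {x : Fin n → ℝ} (hx : ∀ i, 0 ≤ x i) (hx0 : (supp x).Nonempty) :
    ∀ k : ℕ, (∀ i, 0 ≤ ((1 + B) ^ k).mulVec x i) ∧
      (supp (((1 + B) ^ k).mulVec x) = Finset.univ ∨
        (supp x).card + k ≤ (supp (((1 + B) ^ k).mulVec x)).card) ∧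
      supp x ⊆ supp (((1 + B) ^ k).mulVec x) := by
  intro k
  induction k with
  | zero =>
    simp only [pow_zero, Matrix.one_mulVec]
    exact ⟨hx, Or.inr (by omega), le_refl _⟩
  | succ k ih =>
    obtain ⟨hpos, hcard, hsupp⟩ := ih
    have hstep : ((1 + B) ^ (k+1)).mulVec x = (1 + B).mulVec (((1 + B) ^ k).mulVec x) := by
      rw [pow_succ', ← Matrix.mulVec_mulVec]
    set y := ((1 + B) ^ k).mulVec x with hy
    have h1B : ∀ i, 0 ≤ (1 + B).mulVec y i := by
      intro i
      have hval : (1 + B).mulVec y i = y i + B.mulVec y i := by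
        rw [Matrix.add_mulVec, Matrix.one_mulVec]; rfl
      rw [hval]
      have := mulVec_nonneg hB hpos i
      have := hpos i
      linarith
    obtain ⟨hsub, hstrict⟩ := supp_step hB hirr hpos
    refine ⟨by rw [hstep]; exact h1B, ?_, ?_⟩
    · rw [hstep]
      rcases hcard with hcu | hcle
      · left
        apply Finset.eq_univ_of_card
        have := Finset.card_le_card hsub
        rw [hcu] at this
        have h2 := Finset.card_le_univ (supp ((1 + B).mulVec y))
        simp only [Finset.card_univ, Fintype.card_fin] at this h2 ⊢
        omega
      · by_cases hcu : supp y = Finset.univ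
        · left
          apply Finset.eq_univ_of_card
          have := Finset.card_le_card hsub
          rw [hcu] at this
          have h2 := Finset.card_le_univ (supp ((1 + B).mulVec y))
          simp only [Finset.card_univ, Fintype.card_fin] at this h2 ⊢
          omega
        · rcases hstrict hcu with hss | hempty
          · right
            have := Finset.card_lt_card hss
            omega
          · exact absurd (hx0.mono hsupp) hempty
    · rw [hstep]
      exact hsupp.trans hsub

lemma pos_pow_mulVec (hB : ∀ i j, 0 ≤ B i j) (hirr : MatIrreducible B)
    {x : Fin n → ℝ} (hx : ∀ i, 0 ≤ x i) (hx0 : x ≠ 0) :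
    ∀ i, 0 < ((1 + B) ^ (n - 1)).mulVec x i := by
  have hsx : (supp x).Nonempty := by
    obtain ⟨i, hi⟩ := Function.ne_iff.mp hx0
    exact ⟨i, mem_supp.mpr (lt_of_le_of_ne (hx i) (Ne.symm hi))⟩
  obtain ⟨hpos, hcard, -⟩ := supp_pow_card hB hirr hx hsx (n - 1)
  have huniv : supp (((1 + B) ^ (n - 1)).mulVec x) = Finset.univ := by
    rcases hcard with h | h
    · exact h
    · apply Finset.eq_univ_of_card
      have h1 : 1 ≤ (supp x).card := Finset.card_pos.mpr hsx
      have h2 := Finset.card_le_univ (supp (((1 + B) ^ (n - 1)).mulVec x))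
      obtain ⟨i, -⟩ := hsx
      have h3 : 0 < n := i.pos
      simp only [Finset.card_univ, Fintype.card_fin] at h2 ⊢
      omega
  intro i
  exact mem_supp.mp (huniv ▸ Finset.mem_univ i)

lemma connected_eq (hirr : MatIrreducible B) {r : Fin n → ℝ}
    (h : ∀ i j, i ≠ j → B i j ≠ 0 → r i = r j) : ∀ i j, r i = r j := by
  intro i j
  by_contra hne
  set S := Finset.univ.filter (fun k => r k = r j) with hS
  have hjS : j ∈ S := by simp [hS]
  have hSne : S.Nonempty := ⟨j, hjS⟩
  have hSnu : S ≠ Finset.univ := by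
    intro hc
    have : i ∈ S := hc ▸ Finset.mem_univ i
    simp [hS] at this
    exact hne this
  obtain ⟨a, ha, b, hb, hab⟩ := hirr S hSne hSnu
  have hab' : a ≠ b := fun hc => ha (hc ▸ hb)
  have : r a = r b := h a b hab' hab
  simp only [hS, Finset.mem_filter, Finset.mem_univ, true_and] at ha hb
  exact ha (this.trans hb)

end Combinatorial

section Gelfand

lemma map_pow_ofReal (B : Matrix (Fin n) (Fin n) ℝ) (k : ℕ) :
    (B.map Complex.ofReal) ^ k = (B ^ k).map Complex.ofReal := by
  have h : ∀ M : Matrix (Fin n) (Fin n) ℝ, M.map Complex.ofReal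
      = (Complex.ofRealHom.mapMatrix : Matrix (Fin n) (Fin n) ℝ →+* Matrix (Fin n) (Fin n) ℂ) M :=
    fun _ => rfl
  rw [h, h, ← map_pow]

lemma pow_entries_nonneg {B : Matrix (Fin n) (Fin n) ℝ} (hB : ∀ i j, 0 ≤ B i j) :
    ∀ k i j, 0 ≤ (B ^ k) i j := by
  intro k
  induction k with
  | zero =>
    intro i j
    rw [pow_zero]
    by_cases h : i = j <;> simp [Matrix.one_apply, h]
  | succ k ih =>
    intro i j
    rw [pow_succ, Matrix.mul_apply]
    exact Finset.sum_nonneg fun l _ => mul_nonneg (ih i l) (hB l j)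

lemma pow_mulVec_ge {B : Matrix (Fin n) (Fin n) ℝ} (hB : ∀ i j, 0 ≤ B i j)
    {u : Fin n → ℝ} {r : ℝ} (hr : 0 ≤ r)
    (h : ∀ i, r * u i ≤ B.mulVec u i) :
    ∀ (k : ℕ) (i : Fin n), r ^ k * u i ≤ (B ^ k).mulVec u i := by
  intro k
  induction k with
  | zero =>
    intro i
    simp [Matrix.one_mulVec]
  | succ k ih =>
    intro i
    have hstep : (B ^ (k + 1)).mulVec u = (B ^ k).mulVec (B.mulVec u) := by
      rw [Matrix.mulVec_mulVec, ← pow_succ]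
    rw [hstep]
    have h1 : (B ^ k).mulVec (fun j => r * u j) i ≤ (B ^ k).mulVec (B.mulVec u) i :=
      mulVec_mono (pow_entries_nonneg hB k) h i
    have h2 : (B ^ k).mulVec (fun j => r * u j) i = r * (B ^ k).mulVec u i := by
      have : (fun j => r * u j) = r • u := by funext j; simp [Pi.smul_apply, smul_eq_mul]
      rw [this, Matrix.mulVec_smul]
      rfl
    have h3 : r * (r ^ k * u i) ≤ r * (B ^ k).mulVec u i :=
      mul_le_mul_of_nonneg_left (ih i) hr
    calc r ^ (k + 1) * u i = r * (r ^ k * u i) := by ring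
      _ ≤ r * (B ^ k).mulVec u i := h3
      _ = (B ^ k).mulVec (fun j => r * u j) i := h2.symm
      _ ≤ (B ^ k).mulVec (B.mulVec u) i := h1

lemma le_specRad_of_subinvariant (hn : 0 < n) {B : Matrix (Fin n) (Fin n) ℝ}
    (hB : ∀ i j, 0 ≤ B i j) {u : Fin n → ℝ} (hu : ∀ i, 0 < u i) {r : ℝ} (hr : 0 ≤ r)
    (h : ∀ i, r * u i ≤ B.mulVec u i) : r ≤ specRad B := by
  classical
  set X := B.map Complex.ofReal with hX
  set v : Fin n → ℂ := fun i => (u i : ℂ) with hv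
  set i0 : Fin n := ⟨0, hn⟩
  have hv0 : v ≠ 0 := by
    intro hc
    have := congrFun hc i0
    simp only [hv, Pi.zero_apply, Complex.ofReal_eq_zero] at this
    exact (hu i0).ne' this
  have hC : 0 < ‖v‖ := norm_pos_iff.mpr hv0
  set C := ‖v‖ with hCdef
  set c := u i0 / C with hcdef
  have hc : 0 < c := div_pos (hu i0) hC
  have key : ∀ k : ℕ, c * r ^ k ≤ ‖X ^ k‖ := by
    intro k
    have h1 : ‖(X ^ k).mulVec v‖ ≤ ‖X ^ k‖ * C := Matrix.linfty_opNorm_mulVec _ _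
    have h2 : ((X ^ k).mulVec v) i0 = (((B ^ k).mulVec u i0 : ℝ) : ℂ) := by
      rw [map_pow_ofReal]
      exact congrFun (real_mulVec_map (B ^ k) u) i0
    have h3 : ‖((X ^ k).mulVec v) i0‖ ≤ ‖(X ^ k).mulVec v‖ := norm_le_pi_norm _ i0
    have h4 : ‖((X ^ k).mulVec v) i0‖ = |(B ^ k).mulVec u i0| := by
      rw [h2, Complex.norm_real]
      rfl
    have h5 : r ^ k * u i0 ≤ (B ^ k).mulVec u i0 := pow_mulVec_ge hB hr h k i0
    have h6 : (B ^ k).mulVec u i0 ≤ |(B ^ k).mulVec u i0| := le_abs_self _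
    have h7 : r ^ k * u i0 ≤ ‖X ^ k‖ * C := by
      calc r ^ k * u i0 ≤ (B ^ k).mulVec u i0 := h5
        _ ≤ |(B ^ k).mulVec u i0| := h6
        _ = ‖((X ^ k).mulVec v) i0‖ := h4.symm
        _ ≤ ‖(X ^ k).mulVec v‖ := h3
        _ ≤ ‖X ^ k‖ * C := h1
    rw [hcdef]
    rw [div_mul_eq_mul_div, div_le_iff₀ hC]
    calc u i0 * r ^ k = r ^ k * u i0 := by ring
      _ ≤ ‖X ^ k‖ * C := h7
  -- Gelfand's formula
  have gel := spectrum.pow_norm_pow_one_div_tendsto_nhds_spectralRadius X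
  have hlim1 : Tendsto (fun k : ℕ => c ^ (1 / (k : ℝ))) atTop (𝓝 1) := by
    have h0 : Tendsto (fun k : ℕ => 1 / (k : ℝ)) atTop (𝓝 0) :=
      tendsto_one_div_atTop_nhds_zero_nat
    have hcont : ContinuousAt (fun x : ℝ => c ^ x) 0 :=
      Real.continuousAt_const_rpow hc.ne'
    have := hcont.tendsto.comp h0
    simpa [Real.rpow_zero, Function.comp_def] using this
  have hlim2 : Tendsto (fun k : ℕ => ENNReal.ofReal (c ^ (1 / (k : ℝ)) * r)) atTop
      (𝓝 (ENNReal.ofReal r)) := by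
    have := (hlim1.mul_const r)
    rw [one_mul] at this
    exact (ENNReal.continuous_ofReal.continuousAt.tendsto.comp this)
  have hle : ∀ᶠ k : ℕ in atTop, ENNReal.ofReal (c ^ (1 / (k : ℝ)) * r)
      ≤ ENNReal.ofReal (‖X ^ k‖ ^ (1 / (k : ℝ))) := by
    filter_upwards [eventually_ge_atTop 1] with k hk
    apply ENNReal.ofReal_le_ofReal
    have hk0 : (k : ℝ) ≠ 0 := by positivity
    have e1 : c ^ (1 / (k : ℝ)) * r = (c * r ^ k) ^ (1 / (k : ℝ)) := by
      rw [Real.mul_rpow hc.le (pow_nonneg hr k)]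
      congr 1
      rw [← Real.rpow_natCast r k, ← Real.rpow_mul hr]
      rw [mul_one_div, div_self hk0, Real.rpow_one]
    rw [e1]
    apply Real.rpow_le_rpow (by positivity) (key k) (by positivity)
  have hfin : ENNReal.ofReal r ≤ spectralRadius ℂ X :=
    le_of_tendsto_of_tendsto hlim2 gel hle
  have hub : spectralRadius ℂ X ≤ ENNReal.ofReal (specRad B) := by
    rw [spectralRadius]
    apply iSup₂_le
    intro z hz
    rw [← ENNReal.ofReal_coe_nnreal, coe_nnnorm]
    apply ENNReal.ofReal_le_ofReal
    exact abs_le_specRad B hz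
  have := hfin.trans hub
  rwa [ENNReal.ofReal_le_ofReal_iff (specRad_nonneg B hn)] at this

end Gelfand

section Perron

lemma one_add_entries_nonneg {B : Matrix (Fin n) (Fin n) ℝ} (hB : ∀ i j, 0 ≤ B i j) :
    ∀ i j, 0 ≤ (1 + B) i j := by
  intro i j
  by_cases h : i = j
  · subst h
    have := hB i i
    simp only [Matrix.add_apply, Matrix.one_apply_eq]
    linarith
  · have := hB i j
    simp only [Matrix.add_apply, Matrix.one_apply_ne h]
    linarith

theorem perron_nonneg (hn : 0 < n) {B : Matrix (Fin n) (Fin n) ℝ}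
    (hB : ∀ i j, 0 ≤ B i j) (hirr : MatIrreducible B) :
    ∃ u : Fin n → ℝ, (∀ i, 0 < u i) ∧ B.mulVec u = specRad B • u ∧ specBound B = specRad B := by
  classical
  set ρ := specRad B with hρ
  have hρ0 : 0 ≤ ρ := specRad_nonneg B hn
  obtain ⟨lam, hlspec, hlabs⟩ := exists_specRad_eq B hn
  obtain ⟨z, hz0, hz⟩ := mem_spectrum_iff.mp hlspec
  set x : Fin n → ℝ := fun i => ‖z i‖ with hx
  have hxnn : ∀ i, 0 ≤ x i := fun i => (norm_nonneg _)
  have hx0 : x ≠ 0 := by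
    intro hc
    apply hz0
    funext i
    have := congrFun hc i
    simp only [hx, Pi.zero_apply] at this
    exact norm_eq_zero.mp this
  have hsub : ∀ i, ρ * x i ≤ B.mulVec x i := by
    intro i
    have h1 : (B.map Complex.ofReal).mulVec z i = ∑ j, (B i j : ℂ) * z j := by
      simp [Matrix.mulVec, dotProduct, Matrix.map_apply]
    have h2 : ‖((B.map Complex.ofReal).mulVec z i)‖ = ρ * x i := by
      have hzi := congrFun hz i
      rw [hzi]
      simp only [Pi.smul_apply, smul_eq_mul]
      rw [norm_mul, hlabs, ← hρ]
    have h3 : ‖∑ j, (B i j : ℂ) * z j‖ ≤ ∑ j, B i j * x j := by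
      refine (norm_sum_le _ _).trans ?_
      apply Finset.sum_le_sum
      intro j _
      rw [norm_mul, Complex.norm_real, Real.norm_of_nonneg (hB i j)]
    calc ρ * x i = ‖(B.map Complex.ofReal).mulVec z i‖ := h2.symm
      _ = ‖∑ j, (B i j : ℂ) * z j‖ := by rw [h1]
      _ ≤ ∑ j, B i j * x j := h3
      _ = B.mulVec x i := rfl
  set y : Fin n → ℝ := fun i => B.mulVec x i - ρ * x i with hy
  have hynn : ∀ i, 0 ≤ y i := fun i => by simp only [hy]; linarith [hsub i]
  by_cases hy0 : y = 0
  · -- x is an eigenvector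
    have heig : ∀ i, B.mulVec x i = ρ * x i := by
      intro i
      have := congrFun hy0 i
      simp only [hy, Pi.zero_apply] at this
      linarith
    -- positivity of x
    have hxpos : ∀ i, 0 < x i := by
      by_contra hcon
      push_neg at hcon
      obtain ⟨i1, hi1⟩ := hcon
      have hxi1 : x i1 = 0 := le_antisymm hi1 (hxnn i1)
      set S := Finset.univ.filter (fun i => 0 < x i) with hS
      have hSne : S.Nonempty := by
        obtain ⟨i, hi⟩ := Function.ne_iff.mp hx0
        exact ⟨i, by simp [hS, lt_of_le_of_ne (hxnn i) (Ne.symm hi)]⟩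
      have hSnu : S ≠ Finset.univ := by
        intro hc
        have : i1 ∈ S := hc ▸ Finset.mem_univ i1
        simp only [hS, Finset.mem_filter] at this
        linarith [this.2]
      obtain ⟨i, hi, j, hj, hij⟩ := hirr S hSne hSnu
      simp only [hS, Finset.mem_filter, Finset.mem_univ, true_and, not_lt] at hi hj
      have hxi : x i = 0 := le_antisymm hi (hxnn i)
      have h0 : B.mulVec x i = 0 := by rw [heig, hxi, mul_zero]
      have hterm : 0 < B i j * x j := mul_pos (lt_of_le_of_ne (hB i j) (Ne.symm hij)) hj
      have hsumge : B i j * x j ≤ B.mulVec x i := by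
        have : ∀ k ∈ Finset.univ, 0 ≤ B i k * x k := fun k _ => mul_nonneg (hB i k) (hxnn k)
        exact Finset.single_le_sum this (Finset.mem_univ j)
      linarith
    -- spectrum membership of ρ and specBound = ρ
    have hmem : (ρ : ℂ) ∈ spectrum ℂ (B.map Complex.ofReal) := by
      rw [mem_spectrum_iff]
      refine ⟨fun i => (x i : ℂ), ?_, ?_⟩
      · intro hc
        have := congrFun hc ⟨0, hn⟩
        simp only [Pi.zero_apply, Complex.ofReal_eq_zero] at this
        exact (hxpos ⟨0, hn⟩).ne' this
      · rw [real_mulVec_map]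
        funext i
        rw [heig i]
        simp
    have hspecB : specBound B = ρ := by
      apply le_antisymm
      · apply csSup_le
        · exact ⟨ρ, Set.mem_image_of_mem _ hmem⟩
        · rintro - ⟨w, hw, rfl⟩
          calc w.re ≤ ‖w‖ := Complex.re_le_norm w
            _ ≤ ρ := abs_le_specRad B hw
      · have := re_le_specBound B hmem
        simpa using this
    refine ⟨x, hxpos, ?_, hspecB⟩
    funext i
    rw [heig i]
    rfl
  · -- contradiction case
    exfalso
    set E := (1 + B) ^ (n - 1) with hE
    have hEnn : ∀ i j, 0 ≤ E i j := pow_entries_nonneg (one_add_entries_nonneg hB) (n - 1)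
    have hw : ∀ i, 0 < E.mulVec x i := pos_pow_mulVec hB hirr hxnn hx0
    have hzv : ∀ i, 0 < E.mulVec y i := pos_pow_mulVec hB hirr hynn hy0
    set w := E.mulVec x with hwdef
    set zv := E.mulVec y with hzvdef
    have hcomm : B * E = E * B := by
      have h1 : Commute (1 + B) B := ((Commute.one_left B).add_left (Commute.refl B))
      exact (h1.pow_left (n - 1)).symm.eq
    have hBw : ∀ i, B.mulVec w i = ρ * w i + zv i := by
      intro i
      have h1 : B.mulVec w = E.mulVec (B.mulVec x) := by
        rw [hwdef, Matrix.mulVec_mulVec, hcomm, ← Matrix.mulVec_mulVec]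
      have h2 : E.mulVec y i = E.mulVec (B.mulVec x) i - ρ * E.mulVec x i := by
        simp only [Matrix.mulVec, dotProduct, hy]
        rw [Finset.mul_sum, ← Finset.sum_sub_distrib]
        exact Finset.sum_congr rfl fun j _ => by ring
      rw [h1]
      have := h2
      simp only [hzvdef, hwdef]
      linarith [h2]
    -- epsilon
    have hne : (Finset.univ : Finset (Fin n)).Nonempty := ⟨⟨0, hn⟩, Finset.mem_univ _⟩
    set ε := Finset.univ.inf' hne (fun i => zv i / w i) with hεdef
    have hε : 0 < ε := by
      rw [hεdef]
      apply Finset.lt_inf'_iff hne |>.mpr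
      intro i _
      exact div_pos (hzv i) (hw i)
    have hsub2 : ∀ i, (ρ + ε) * w i ≤ B.mulVec w i := by
      intro i
      have h1 : ε ≤ zv i / w i := Finset.inf'_le _ (Finset.mem_univ i)
      have h2 : ε * w i ≤ zv i := (le_div_iff₀ (hw i)).mp h1
      have := hBw i
      nlinarith
    have := le_specRad_of_subinvariant hn hB hw (by linarith) hsub2
    rw [← hρ] at this
    linarith

theorem perron_quasipositive (hn : 0 < n) {M : Matrix (Fin n) (Fin n) ℝ}
    (hM : ∀ i j, i ≠ j → 0 ≤ M i j) (hirr : MatIrreducible M) :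
    ∃ u : Fin n → ℝ, (∀ i, 0 < u i) ∧ M.mulVec u = specBound M • u := by
  classical
  set c := 1 + ∑ i, |M i i| with hc
  have hcdiag : ∀ i, 0 ≤ M i i + c := by
    intro i
    have h1 : |M i i| ≤ ∑ j, |M j j| :=
      Finset.single_le_sum (fun j _ => abs_nonneg (M j j)) (Finset.mem_univ i)
    have h2 : -M i i ≤ |M i i| := neg_le_abs _
    simp only [hc]
    linarith
  set B := M + c • 1 with hB
  have hBnn : ∀ i j, 0 ≤ B i j := by
    intro i j
    by_cases h : i = j
    · subst h
      simp only [hB, Matrix.add_apply, Matrix.smul_apply, Matrix.one_apply_eq, smul_eq_mul,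
        mul_one]
      exact hcdiag i
    · simp only [hB, Matrix.add_apply, Matrix.smul_apply, Matrix.one_apply_ne h, smul_eq_mul,
        mul_zero, add_zero]
      exact hM i j h
  have hBirr : MatIrreducible B := by
    intro S hS hSu
    obtain ⟨i, hi, j, hj, hij⟩ := hirr S hS hSu
    refine ⟨i, hi, j, hj, ?_⟩
    have hne : i ≠ j := fun hc' => hi (hc' ▸ hj)
    simp only [hB, Matrix.add_apply, Matrix.smul_apply, Matrix.one_apply_ne hne, smul_eq_mul,
      mul_zero, add_zero]
    exact hij
  obtain ⟨u, hu, heig, hspec⟩ := perron_nonneg hn hBnn hBirr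
  have haff : specBound B = specBound M + c := by
    have h1 : B = (1 : ℝ) • M + c • 1 := by rw [one_smul]
    rw [h1, specBound_affine M hn one_pos c, one_mul]
  refine ⟨u, hu, ?_⟩
  have h2 : B.mulVec u = M.mulVec u + c • u := by
    rw [hB, Matrix.add_mulVec, Matrix.smul_mulVec, Matrix.one_mulVec]
  have h3 : M.mulVec u = specRad B • u - c • u := by
    rw [← heig, h2]
    abel
  rw [h3, ← hspec, haff]
  funext i
  simp only [Pi.sub_apply, Pi.smul_apply, smul_eq_mul]
  ring

end Perron

section KeyInequality

variable {M : Matrix (Fin n) (Fin n) ℝ}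

lemma eigen_ratio_sum {u ψ : Fin n → ℝ} (hu : ∀ i, 0 < u i) {s : ℝ}
    (hMu : M.mulVec u = s • u) :
    ∑ i, ψ i * u i * (M.mulVec u i / u i) = s * ∑ i, ψ i * u i := by
  rw [Finset.mul_sum]
  apply Finset.sum_congr rfl
  intro i _
  have h1 : M.mulVec u i = s * u i := by
    have := congrFun hMu i
    simpa using this
  rw [h1, mul_div_assoc, div_self (hu i).ne', mul_one]
  ring

lemma key_ineq (hM : ∀ i j, i ≠ j → 0 ≤ M i j) (hirr : MatIrreducible M)
    {u ψ : Fin n → ℝ} (hu : ∀ i, 0 < u i) (hψ : ∀ i, 0 < ψ i) {s : ℝ}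
    (hMu : M.mulVec u = s • u) (hMψ : Mᵀ.mulVec ψ = s • ψ)
    {v : Fin n → ℝ} (hv : ∀ i, 0 < v i) :
    s * (∑ i, ψ i * u i) ≤ ∑ i, ψ i * u i * (M.mulVec v i / v i) ∧
    ((∑ i, ψ i * u i * (M.mulVec v i / v i)) = s * (∑ i, ψ i * u i) →
      ∃ t : ℝ, 0 < t ∧ ∀ i, v i = t * u i) := by
  classical
  set r : Fin n → ℝ := fun i => v i / u i with hr
  have hrpos : ∀ i, 0 < r i := fun i => div_pos (hv i) (hu i)
  set d : Fin n → Fin n → ℝ := fun i j => ψ i * M i j * u j with hd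
  have hdnn : ∀ i j, i ≠ j → 0 ≤ d i j := fun i j hij =>
    mul_nonneg (mul_nonneg (hψ i).le (hM i j hij)) (hu j).le
  -- row sums and column sums of d
  have hrow : ∀ i, ∑ j, d i j = s * (ψ i * u i) := by
    intro i
    have h1 : M.mulVec u i = s * u i := by simpa using congrFun hMu i
    have h2 : ∑ j, d i j = ψ i * M.mulVec u i := by
      simp only [hd, Matrix.mulVec, dotProduct, Finset.mul_sum]
      exact Finset.sum_congr rfl fun j _ => by ring
    rw [h2, h1]; ring
  have hcol : ∀ j, ∑ i, d i j = s * (ψ j * u j) := by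
    intro j
    have h1 : Mᵀ.mulVec ψ j = s * ψ j := by simpa using congrFun hMψ j
    have h2 : ∑ i, d i j = (Mᵀ.mulVec ψ j) * u j := by
      simp only [hd, Matrix.mulVec, dotProduct, Matrix.transpose_apply,
        Finset.sum_mul]
      exact Finset.sum_congr rfl fun i _ => by ring
    rw [h2, h1]; ring
  -- T - s*W equals the double sum D
  have hT : ∑ i, ψ i * u i * (M.mulVec v i / v i)
      = ∑ i, ∑ j, d i j * (r j / r i) := by
    apply Finset.sum_congr rfl
    intro i _
    have h2 : ψ i * u i * (M.mulVec v i / v i) = ∑ j, ψ i * u i * (M i j * v j) / v i := by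
      simp only [Matrix.mulVec, dotProduct, Finset.mul_sum, Finset.sum_div]
      exact Finset.sum_congr rfl fun j _ => by ring
    rw [h2]
    apply Finset.sum_congr rfl
    intro j _
    simp only [hd, hr]
    rw [div_div_div_eq, ← mul_div_assoc,
      div_eq_div_iff (hv i).ne' (mul_ne_zero (hu j).ne' (hv i).ne')]
    ring
  have hsW : s * (∑ i, ψ i * u i) = ∑ i, ∑ j, d i j := by
    rw [Finset.mul_sum]
    exact Finset.sum_congr rfl fun i _ => (hrow i).symm
  -- the log-sum is zero
  have hlog : ∑ i, ∑ j, d i j * (Real.log (r j) - Real.log (r i)) = 0 := by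
    have h1 : ∑ i, ∑ j, d i j * (Real.log (r j) - Real.log (r i))
        = (∑ i, ∑ j, d i j * Real.log (r j)) - ∑ i, ∑ j, d i j * Real.log (r i) := by
      rw [← Finset.sum_sub_distrib]
      exact Finset.sum_congr rfl fun i _ => by
        rw [← Finset.sum_sub_distrib]
        exact Finset.sum_congr rfl fun j _ => by ring
    rw [h1]
    have h2 : ∑ i, ∑ j, d i j * Real.log (r j) = ∑ j, s * (ψ j * u j) * Real.log (r j) := by
      rw [Finset.sum_comm]
      exact Finset.sum_congr rfl fun j _ => by
        rw [← Finset.sum_mul, hcol j]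
    have h3 : ∑ i, ∑ j, d i j * Real.log (r i) = ∑ i, s * (ψ i * u i) * Real.log (r i) := by
      exact Finset.sum_congr rfl fun i _ => by
        rw [← Finset.sum_mul, hrow i]
    rw [h2, h3, sub_self]
  -- termwise inequality
  have hterm : ∀ i j, d i j * (Real.log (r j) - Real.log (r i)) ≤ d i j * (r j / r i - 1) := by
    intro i j
    by_cases hij : i = j
    · subst hij
      rw [sub_self, div_self (hrpos i).ne', sub_self]
    · have hx : 0 < r j / r i := div_pos (hrpos j) (hrpos i)
      have hlogx : Real.log (r j / r i) = Real.log (r j) - Real.log (r i) :=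
        Real.log_div (hrpos j).ne' (hrpos i).ne'
      have h1 : Real.log (r j / r i) ≤ r j / r i - 1 := Real.log_le_sub_one_of_pos hx
      rw [← hlogx]
      exact mul_le_mul_of_nonneg_left h1 (hdnn i j hij)
  have hDge : 0 ≤ ∑ i, ∑ j, d i j * (r j / r i - 1) := by
    rw [← hlog]
    apply Finset.sum_le_sum
    intro i _
    exact Finset.sum_le_sum fun j _ => hterm i j
  have hDiff : ∑ i, ψ i * u i * (M.mulVec v i / v i) - s * (∑ i, ψ i * u i)
      = ∑ i, ∑ j, d i j * (r j / r i - 1) := by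
    rw [hT, hsW, ← Finset.sum_sub_distrib]
    apply Finset.sum_congr rfl
    intro i _
    rw [← Finset.sum_sub_distrib]
    exact Finset.sum_congr rfl fun j _ => by ring
  constructor
  · linarith [hDge, hDiff]
  · intro heq
    -- equality case
    have hD0 : ∑ i, ∑ j, d i j * (r j / r i - 1) = 0 := by
      rw [← hDiff, heq, sub_self]
    -- each term of the nonneg double sum (D - L) is zero
    have hsum0 : ∑ i, ∑ j, (d i j * (r j / r i - 1)
        - d i j * (Real.log (r j) - Real.log (r i))) = 0 := by
      have : ∑ i, ∑ j, (d i j * (r j / r i - 1)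
          - d i j * (Real.log (r j) - Real.log (r i)))
          = (∑ i, ∑ j, d i j * (r j / r i - 1))
            - ∑ i, ∑ j, d i j * (Real.log (r j) - Real.log (r i)) := by
        rw [← Finset.sum_sub_distrib]
        exact Finset.sum_congr rfl fun i _ => by
          rw [← Finset.sum_sub_distrib]
      rw [this, hD0, hlog, sub_self]
    have hterm0 : ∀ i j, d i j * (r j / r i - 1)
        - d i j * (Real.log (r j) - Real.log (r i)) = 0 := by
      have houter := (Finset.sum_eq_zero_iff_of_nonneg (fun i _ =>
        Finset.sum_nonneg (fun j _ => by linarith [hterm i j]))).mp hsum0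
      intro i j
      have hinner := (Finset.sum_eq_zero_iff_of_nonneg (fun j _ => by
        linarith [hterm i j])).mp (houter i (Finset.mem_univ i))
      exact hinner j (Finset.mem_univ j)
    -- whenever M i j ≠ 0 (i ≠ j), r i = r j
    have hreq : ∀ i j, i ≠ j → M i j ≠ 0 → r i = r j := by
      intro i j hij hMij
      by_contra hne
      have hdpos : 0 < d i j :=
        mul_pos (mul_pos (hψ i) (lt_of_le_of_ne (hM i j hij) (Ne.symm hMij))) (hu j)
      have hx : 0 < r j / r i := div_pos (hrpos j) (hrpos i)
      have hxne : r j / r i ≠ 1 := by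
        intro hc
        exact hne ((div_eq_one_iff_eq (hrpos i).ne').mp hc).symm
      have hstrict : Real.log (r j / r i) < r j / r i - 1 :=
        Real.log_lt_sub_one_of_pos hx hxne
      have hlogx : Real.log (r j / r i) = Real.log (r j) - Real.log (r i) :=
        Real.log_div (hrpos j).ne' (hrpos i).ne'
      have := hterm0 i j
      rw [← hlogx] at this
      nlinarith
    have hconst := connected_eq hirr hreq
    rcases Nat.eq_zero_or_pos n with hn0 | hn
    · refine ⟨1, one_pos, fun i => ?_⟩
      exact absurd i.2 (by omega)
    · set i0 : Fin n := ⟨0, hn⟩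
      refine ⟨r i0, hrpos i0, fun i => ?_⟩
      have h1 : r i = r i0 := hconst i i0
      have h2 : v i = r i * u i := by
        simp only [hr]
        rw [div_mul_cancel₀ _ (hu i).ne']
      rw [h2, h1]

end KeyInequality

section Main

lemma ratio_sum_eigen' {P : Matrix (Fin n) (Fin n) ℝ} (w : Fin n → ℝ) {v : Fin n → ℝ}
    (hv : ∀ i, 0 < v i) {s : ℝ} (h : P.mulVec v = s • v) :
    ∑ i, w i * (P.mulVec v i / v i) = s * ∑ i, w i := by
  rw [Finset.mul_sum]
  apply Finset.sum_congr rfl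
  intro i _
  have h1 : P.mulVec v i = s * v i := by simpa using congrFun h i
  rw [h1, mul_div_assoc, div_self (hv i).ne', mul_one]
  ring

lemma mulVec_decomp (A : Matrix (Fin n) (Fin n) ℝ) (q : Fin n → ℝ) (μ : ℝ) (v : Fin n → ℝ)
    (i : Fin n) :
    (μ • A + Matrix.diagonal q).mulVec v i = μ * A.mulVec v i + q i * v i := by
  rw [Matrix.add_mulVec, Matrix.smul_mulVec]
  simp only [Pi.add_apply, Pi.smul_apply, smul_eq_mul]
  congr 1
  rw [Matrix.mulVec_diagonal]

lemma Tsum_decomp (A : Matrix (Fin n) (Fin n) ℝ) (q : Fin n → ℝ) (μ : ℝ) (w : Fin n → ℝ)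
    {v : Fin n → ℝ} (hv : ∀ i, 0 < v i) :
    ∑ i, w i * ((μ • A + Matrix.diagonal q).mulVec v i / v i)
      = μ * ∑ i, w i * (A.mulVec v i / v i) + ∑ i, w i * q i := by
  rw [Finset.mul_sum, ← Finset.sum_add_distrib]
  apply Finset.sum_congr rfl
  intro i _
  have hvne : v i ≠ 0 := (hv i).ne'
  rw [mulVec_decomp]
  field_simp

lemma Mmu_qp {A : Matrix (Fin n) (Fin n) ℝ} (hA_qp : ∀ i j, i ≠ j → 0 ≤ A i j)
    (q : Fin n → ℝ) {μ : ℝ} (hμ : 0 ≤ μ) :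
    ∀ i j, i ≠ j → 0 ≤ (μ • A + Matrix.diagonal q) i j := by
  intro i j hij
  have h : (μ • A + Matrix.diagonal q) i j = μ * A i j := by
    simp [Matrix.add_apply, Matrix.smul_apply, Matrix.diagonal_apply_ne _ hij]
  rw [h]
  exact mul_nonneg hμ (hA_qp i j hij)

lemma Mmu_irr {A : Matrix (Fin n) (Fin n) ℝ} (hA_irr : MatIrreducible A)
    (q : Fin n → ℝ) {μ : ℝ} (hμ : μ ≠ 0) :
    MatIrreducible (μ • A + Matrix.diagonal q) := by
  intro S h1 h2
  obtain ⟨i, hi, j, hj, hij⟩ := hA_irr S h1 h2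
  refine ⟨i, hi, j, hj, ?_⟩
  have hne : i ≠ j := fun hc => hi (hc ▸ hj)
  have h : (μ • A + Matrix.diagonal q) i j = μ * A i j := by
    simp [Matrix.add_apply, Matrix.smul_apply, Matrix.diagonal_apply_ne _ hne]
  rw [h]
  exact mul_ne_zero hμ hij

lemma diagonal_const (c : ℝ) :
    Matrix.diagonal (fun _ : Fin n => c) = c • (1 : Matrix (Fin n) (Fin n) ℝ) := by
  ext i j
  by_cases h : i = j <;>
    simp [Matrix.diagonal_apply, Matrix.one_apply, h]

lemma specBound_zero_dim (h : n = 0) (M : Matrix (Fin n) (Fin n) ℝ) : specBound M = 0 := by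
  subst h
  have hS : spectrum ℂ (M.map Complex.ofReal) = ∅ := by
    rw [Set.eq_empty_iff_forall_notMem]
    intro z hz
    obtain ⟨v, hv, -⟩ := mem_spectrum_iff.mp hz
    exact hv (funext fun i => i.elim0)
  rw [specBound, hS, Set.image_empty, Real.sSup_empty]

set_option maxHeartbeats 1000000 in
lemma main_step (hn : 0 < n) (A : Matrix (Fin n) (Fin n) ℝ)
    (hA_qp : ∀ i j, i ≠ j → 0 ≤ A i j) (hA_irr : MatIrreducible A)
    (hsA : specBound A ≤ 0) (q : Fin n → ℝ) {μ1 μ2 : ℝ} (hμ1 : 0 < μ1) (h12 : μ1 < μ2) :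
    specBound (μ2 • A + Matrix.diagonal q) ≤ specBound (μ1 • A + Matrix.diagonal q) ∧
      (specBound (μ1 • A + Matrix.diagonal q) = specBound (μ2 • A + Matrix.diagonal q) →
        specBound A = 0 ∧ ∀ i, q i = specBound (μ2 • A + Matrix.diagonal q)) := by
  classical
  have hμ2 : 0 < μ2 := hμ1.trans h12
  -- Perron data
  obtain ⟨u1, hu1, heig1⟩ := perron_quasipositive hn (Mmu_qp hA_qp q hμ1.le)
    (Mmu_irr hA_irr q hμ1.ne')
  obtain ⟨u2, hu2, heig2⟩ := perron_quasipositive hn (Mmu_qp hA_qp q hμ2.le)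
    (Mmu_irr hA_irr q hμ2.ne')
  have hqpT : ∀ i j, i ≠ j → 0 ≤ (μ2 • A + Matrix.diagonal q)ᵀ i j := by
    intro i j hij
    exact Mmu_qp hA_qp q hμ2.le j i (Ne.symm hij)
  obtain ⟨ψ2, hψ2, heigψ2⟩ := perron_quasipositive hn hqpT
    (irreducible_transpose (Mmu_irr hA_irr q hμ2.ne'))
  rw [specBound_transpose] at heigψ2
  obtain ⟨vA, hvA, heigA⟩ := perron_quasipositive hn hA_qp hA_irr
  -- positivity of the weight sum
  have hW : 0 < (∑ i, ψ2 i * u2 i) :=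
    Finset.sum_pos (fun i _ => mul_pos (hψ2 i) (hu2 i)) ⟨⟨0, hn⟩, Finset.mem_univ _⟩
  -- decompositions at the eigenvectors
  have hT2u2 : (∑ i, ψ2 i * u2 i * ((μ2 • A + Matrix.diagonal q).mulVec u2 i / u2 i)) = specBound (μ2 • A + Matrix.diagonal q) * (∑ i, ψ2 i * u2 i) :=
    ratio_sum_eigen' (fun i => ψ2 i * u2 i) hu2 heig2
  have hT1u1 : (∑ i, ψ2 i * u2 i * ((μ1 • A + Matrix.diagonal q).mulVec u1 i / u1 i)) = specBound (μ1 • A + Matrix.diagonal q) * (∑ i, ψ2 i * u2 i) :=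
    ratio_sum_eigen' (fun i => ψ2 i * u2 i) hu1 heig1
  have hD2u2 : (∑ i, ψ2 i * u2 i * ((μ2 • A + Matrix.diagonal q).mulVec u2 i / u2 i)) = μ2 * (∑ i, ψ2 i * u2 i * (A.mulVec u2 i / u2 i)) + (∑ i, ψ2 i * u2 i * q i) :=
    Tsum_decomp A q μ2 (fun i => ψ2 i * u2 i) hu2
  have hD1u1 : (∑ i, ψ2 i * u2 i * ((μ1 • A + Matrix.diagonal q).mulVec u1 i / u1 i)) = μ1 * (∑ i, ψ2 i * u2 i * (A.mulVec u1 i / u1 i)) + (∑ i, ψ2 i * u2 i * q i) :=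
    Tsum_decomp A q μ1 (fun i => ψ2 i * u2 i) hu1
  -- key inequality for M2
  have hkey : ∀ v : Fin n → ℝ, (∀ i, 0 < v i) →
      specBound (μ2 • A + Matrix.diagonal q) * (∑ i, ψ2 i * u2 i) ≤ (∑ i, ψ2 i * u2 i * ((μ2 • A + Matrix.diagonal q).mulVec v i / v i)) ∧
      ((∑ i, ψ2 i * u2 i * ((μ2 • A + Matrix.diagonal q).mulVec v i / v i)) = specBound (μ2 • A + Matrix.diagonal q) * (∑ i, ψ2 i * u2 i) → ∃ t : ℝ, 0 < t ∧ ∀ i, v i = t * u2 i) :=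
    fun v hv => key_ineq (Mmu_qp hA_qp q hμ2.le) (Mmu_irr hA_irr q hμ2.ne')
      hu2 hψ2 heig2 heigψ2 hv
  -- Phi is minimized at u2
  have hPhiMin : ∀ v : Fin n → ℝ, (∀ i, 0 < v i) →
      (∑ i, ψ2 i * u2 i * (A.mulVec u2 i / u2 i)) ≤ (∑ i, ψ2 i * u2 i * (A.mulVec v i / v i)) := by
    intro v hv
    have h1 := (hkey v hv).1
    have h2 : (∑ i, ψ2 i * u2 i * ((μ2 • A + Matrix.diagonal q).mulVec v i / v i)) = μ2 * (∑ i, ψ2 i * u2 i * (A.mulVec v i / v i)) + (∑ i, ψ2 i * u2 i * q i) :=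
      Tsum_decomp A q μ2 (fun i => ψ2 i * u2 i) hv
    rw [h2] at h1
    rw [hD2u2] at hT2u2
    nlinarith
  -- Phi at the Perron vector of A
  have hPhivA : (∑ i, ψ2 i * u2 i * (A.mulVec vA i / vA i)) = specBound A * (∑ i, ψ2 i * u2 i) :=
    ratio_sum_eigen' (fun i => ψ2 i * u2 i) hvA heigA
  have hPhiu2_le : (∑ i, ψ2 i * u2 i * (A.mulVec u2 i / u2 i)) ≤ specBound A * (∑ i, ψ2 i * u2 i) := by
    rw [← hPhivA]
    exact hPhiMin vA hvA
  have hPhiu2_np : (∑ i, ψ2 i * u2 i * (A.mulVec u2 i / u2 i)) ≤ 0 := by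
    nlinarith
  -- the two balance identities
  have hbal1 : μ1 * (∑ i, ψ2 i * u2 i * (A.mulVec u1 i / u1 i)) + (∑ i, ψ2 i * u2 i * q i) = specBound (μ1 • A + Matrix.diagonal q) * (∑ i, ψ2 i * u2 i) := by
    rw [← hD1u1]
    exact hT1u1
  have hbal2 : μ2 * (∑ i, ψ2 i * u2 i * (A.mulVec u2 i / u2 i)) + (∑ i, ψ2 i * u2 i * q i) = specBound (μ2 • A + Matrix.diagonal q) * (∑ i, ψ2 i * u2 i) := by
    rw [← hD2u2]
    exact hT2u2
  have hmin12 : (∑ i, ψ2 i * u2 i * (A.mulVec u2 i / u2 i)) ≤ (∑ i, ψ2 i * u2 i * (A.mulVec u1 i / u1 i)) := hPhiMin u1 hu1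
  constructor
  · -- antitone
    nlinarith [hbal1, hbal2, hmin12, hPhiu2_np, hW]
  · intro heq
    have hPhiu2_0 : (∑ i, ψ2 i * u2 i * (A.mulVec u2 i / u2 i)) = 0 := by
      nlinarith [hbal1, hbal2, hmin12, hPhiu2_np]
    have hsA0 : specBound A = 0 := by
      nlinarith [hPhiu2_le, hPhiu2_0, hW]
    have hPhivA0 : (∑ i, ψ2 i * u2 i * (A.mulVec vA i / vA i)) = 0 := by
      rw [hPhivA, hsA0, zero_mul]
    have heqvA : (∑ i, ψ2 i * u2 i * ((μ2 • A + Matrix.diagonal q).mulVec vA i / vA i)) = specBound (μ2 • A + Matrix.diagonal q) * (∑ i, ψ2 i * u2 i) := by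
      have h2 : (∑ i, ψ2 i * u2 i * ((μ2 • A + Matrix.diagonal q).mulVec vA i / vA i)) = μ2 * (∑ i, ψ2 i * u2 i * (A.mulVec vA i / vA i)) + (∑ i, ψ2 i * u2 i * q i) :=
        Tsum_decomp A q μ2 (fun i => ψ2 i * u2 i) hvA
      rw [h2, hPhivA0, mul_zero, zero_add, ← hbal2, hPhiu2_0, mul_zero, zero_add]
    obtain ⟨t, ht, hvAu2⟩ := (hkey vA hvA).2 heqvA
    have hAu2 : ∀ i, A.mulVec u2 i = 0 := by
      have hvAe : vA = t • u2 := funext fun j => by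
        rw [hvAu2 j]; rfl
      intro i
      have h1 : A.mulVec vA i = specBound A * vA i := by simpa using congrFun heigA i
      rw [hsA0, zero_mul] at h1
      have h2 : A.mulVec vA i = t * A.mulVec u2 i := by
        rw [hvAe, Matrix.mulVec_smul]
        rfl
      rw [h2] at h1
      exact (mul_eq_zero.mp h1).resolve_left ht.ne'
    refine ⟨hsA0, fun i => ?_⟩
    have h3 : (μ2 • A + Matrix.diagonal q).mulVec u2 i = specBound (μ2 • A + Matrix.diagonal q) * u2 i := by simpa using congrFun heig2 i
    have h4 : (μ2 • A + Matrix.diagonal q).mulVec u2 i = μ2 * A.mulVec u2 i + q i * u2 i :=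
      mulVec_decomp A q μ2 u2 i
    rw [hAu2 i, mul_zero, zero_add] at h4
    have h5 : q i * u2 i = specBound (μ2 • A + Matrix.diagonal q) * u2 i := by rw [← h4, h3]
    exact mul_right_cancel₀ (hu2 i).ne' h5

end Main

end PF

/-- For an irreducible quasi-positive matrix `A` with `s(A) ≤ 0` and a diagonal matrix
`Q = diagonal q`, the map `μ ↦ s(μA + Q)` is either constant or strictly decreasing
on `(0, ∞)`. -/
theorem stmt1 {n : ℕ} (A : Matrix (Fin n) (Fin n) ℝ)
    (hA_qp : ∀ i j, i ≠ j → 0 ≤ A i j)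
    (hA_irr : MatIrreducible A)
    (hsA : specBound A ≤ 0)
    (q : Fin n → ℝ) :
    (∃ c : ℝ, ∀ μ ∈ Set.Ioi (0:ℝ),
        specBound (μ • A + Matrix.diagonal q) = c) ∨
    StrictAntiOn (fun μ : ℝ => specBound (μ • A + Matrix.diagonal q)) (Set.Ioi 0) := by
  classical
  rcases Nat.eq_zero_or_pos n with hn0 | hn
  · exact Or.inl ⟨0, fun μ _ => PF.specBound_zero_dim hn0 _⟩
  by_cases hc : ∃ μ1 : ℝ, 0 < μ1 ∧ ∃ μ2 : ℝ, μ1 < μ2 ∧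
      specBound (μ1 • A + Matrix.diagonal q) ≤ specBound (μ2 • A + Matrix.diagonal q)
  · obtain ⟨μ1, hμ1, μ2, h12, hle⟩ := hc
    obtain ⟨hanti, heqcase⟩ := PF.main_step hn A hA_qp hA_irr hsA q hμ1 h12
    obtain ⟨hsA0, hq⟩ := heqcase (le_antisymm hle hanti)
    left
    set c0 := specBound (μ2 • A + Matrix.diagonal q) with hc0
    have hqc : q = fun _ => c0 := funext hq
    refine ⟨c0, fun μ hμ => ?_⟩
    rw [hqc, PF.diagonal_const c0, PF.specBound_affine A hn (Set.mem_Ioi.mp hμ) c0,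
      hsA0, mul_zero, zero_add]
  · push_neg at hc
    right
    intro a ha b hb hab
    exact hc a (Set.mem_Ioi.mp ha) b hab
end
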